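/- arXiv:math/0606163 — 9 statements merged into one kernel-verified Lean document; each statement's English description precedes it below -/
import Mathlib

section
/- Let G = (V,E) be a finite simple bipartite graph and let 𝒫(G) = { x ∈ ℝ^V : x_v ≥ 0 for all v ∈ V, and x_u + x_v ≤ 1 for every edge uv ∈ E }. Then every extreme point of 𝒫(G) has all coordinates in {0,1}; in particular every extreme point is an integer vector. -/
/-!
Let `δ t = min t (1 - t)`. Shift every coordinate `x u` up by `δ (x u)` on one side of a
`2`-colouring and down by the same amount on the other. Both shifted points stay in `𝒫(G)`:
`|δ a| ≤ a` for `a ≥ 0`, and across an edge the two shifts have opposite signs, while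
`a + b ≤ 1` implies `a + b + |δ a - δ b| ≤ 1`. Since `x` is their midpoint, extremality forces
`δ (x u) = 0`, i.e. `x u ∈ {0, 1}`, for every `u`.
-/

/-- The polytope `𝒫(G)` of a simple graph `G`: nonnegative real vectors whose
coordinate sums over edges are at most `1`. -/
def graphPolytope {V : Type*} (G : SimpleGraph V) : Set (V → ℝ) :=
  {x | (∀ v, 0 ≤ x v) ∧ ∀ u v, G.Adj u v → x u + x v ≤ 1}

theorem Set.eq_zero_of_add_mem_of_sub_mem_of_mem_extremePoints {𝕜 E : Type*} [Ring 𝕜]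
    [LinearOrder 𝕜] [IsStrictOrderedRing 𝕜] [Invertible (2 : 𝕜)] [AddCommGroup E] [Module 𝕜 E]
    {A : Set E} {x y : E} (hx : x ∈ A.extremePoints 𝕜) (hadd : x + y ∈ A) (hsub : x - y ∈ A) :
    y = 0 :=
  add_eq_left.mp (hx.2 hadd hsub (mem_openSegment_add_sub x y))

theorem SimpleGraph.Colorable.exists_sign_neg_of_adj {V : Type*} {G : SimpleGraph V}
    (h : G.Colorable 2) :
    ∃ σ : V → ℝ, (∀ u, |σ u| = 1) ∧ ∀ u w, G.Adj u w → σ w = -σ u := by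
  obtain ⟨c⟩ := h
  refine ⟨fun u => if c u = 0 then 1 else -1, fun u => ?_, fun u w huw => ?_⟩
  · dsimp only
    split_ifs <;> simp
  · have hcw := c.valid huw
    dsimp only
    split_ifs <;> norm_num <;> omega

section LinearOrderedField

variable {α : Type*} [Field α] [LinearOrder α] [IsStrictOrderedRing α]

theorem abs_min_self_one_sub_le {a : α} (ha : 0 ≤ a) : |min a (1 - a)| ≤ a := by
  rw [abs_le]
  constructor <;> cases min_cases a (1 - a) <;> linarith

theorem add_add_abs_sub_min_self_one_sub_le_one {a b : α} (hab : a + b ≤ 1) :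
    a + b + |min a (1 - a) - min b (1 - b)| ≤ 1 := by
  have habs : |min a (1 - a) - min b (1 - b)| ≤ 1 - a - b := by
    rw [abs_le]
    constructor <;> cases min_cases a (1 - a) <;> cases min_cases b (1 - b) <;> linarith
  linarith

theorem mul_le_abs_of_abs_le_one {s t : α} (hs : |s| ≤ 1) : s * t ≤ |t| :=
  calc s * t ≤ |s * t| := le_abs_self _
    _ = |s| * |t| := abs_mul s t
    _ ≤ |t| := mul_le_of_le_one_left (abs_nonneg t) hs

end LinearOrderedField

theorem add_mul_min_self_one_sub_mem_graphPolytope {V : Type*} {G : SimpleGraph V}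
    {x : V → ℝ} (hx : x ∈ graphPolytope G) {σ : V → ℝ} (hσ : ∀ u, |σ u| ≤ 1)
    (hneg : ∀ u w, G.Adj u w → σ w = -σ u) :
    x + (fun u => σ u * min (x u) (1 - x u)) ∈ graphPolytope G := by
  obtain ⟨hnonneg, hedge⟩ := hx
  refine ⟨fun u => ?_, fun u w huw => ?_⟩
  · have hshift : -(σ u * min (x u) (1 - x u)) ≤ x u :=
      calc -(σ u * min (x u) (1 - x u)) = -σ u * min (x u) (1 - x u) := (neg_mul _ _).symm
        _ ≤ |min (x u) (1 - x u)| := mul_le_abs_of_abs_le_one ((abs_neg (σ u)).trans_le (hσ u))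
        _ ≤ x u := abs_min_self_one_sub_le (hnonneg u)
    simp only [Pi.add_apply]
    linarith
  · have hshift : σ u * min (x u) (1 - x u) + σ w * min (x w) (1 - x w)
        ≤ |min (x u) (1 - x u) - min (x w) (1 - x w)| := by
      rw [hneg u w huw, neg_mul, ← sub_eq_add_neg, ← mul_sub]
      exact mul_le_abs_of_abs_le_one (hσ u)
    have := add_add_abs_sub_min_self_one_sub_le_one (hedge u w huw)
    simp only [Pi.add_apply]
    linarith

theorem bipartite_graphPolytope_extremePoints_integral_general
    {V : Type*} (G : SimpleGraph V) (hbip : G.Colorable 2)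
    (x : V → ℝ) (hx : x ∈ Set.extremePoints ℝ (graphPolytope G)) :
    ∀ v, x v = 0 ∨ x v = 1 := by
  obtain ⟨σ, hσ, hneg⟩ := hbip.exists_sign_neg_of_adj
  have hadd := add_mul_min_self_one_sub_mem_graphPolytope hx.1 (fun u => (hσ u).le) hneg
  have hsub : x - (fun u => σ u * min (x u) (1 - x u)) ∈ graphPolytope G := by
    have := add_mul_min_self_one_sub_mem_graphPolytope hx.1 (σ := -σ)
      (fun u => by simp [hσ u]) (fun u w huw => by simp [hneg u w huw])
    convert this using 1
    funext u
    simp only [Pi.sub_apply, Pi.add_apply, Pi.neg_apply]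
    ring
  have hzero := Set.eq_zero_of_add_mem_of_sub_mem_of_mem_extremePoints hx hadd hsub
  intro v
  have hσv : σ v ≠ 0 := fun h => by simpa [h] using hσ v
  have hmin : min (x v) (1 - x v) = 0 := by
    simpa [hσv] using congrFun hzero v
  cases min_cases (x v) (1 - x v) <;> [left; right] <;> linarith

theorem bipartite_graphPolytope_extremePoints_integral
    {V : Type*} [Fintype V] (G : SimpleGraph V) (hbip : G.Colorable 2)
    (x : V → ℝ) (hx : x ∈ Set.extremePoints ℝ (graphPolytope G)) :
    ∀ v, x v = 0 ∨ x v = 1 :=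
  bipartite_graphPolytope_extremePoints_integral_general G hbip x hx
end

section
/- Let G = (V,E) be any finite simple graph and let 𝒫(G) = { x ∈ ℝ^V : x_v ≥ 0 for all v ∈ V, and x_u + x_v ≤ 1 for every edge uv ∈ E }. Then every extreme point of 𝒫(G) has all coordinates in {0, 1/2, 1}; in particular twice any extreme point is an integer vector. -/
open Filter Topology

theorem eq_zero_of_mem_extremePoints_of_eventually_add_smul_mem {E : Type*} [AddCommGroup E]
    [Module ℝ E] {S : Set E} {x d : E} (hx : x ∈ S.extremePoints ℝ)
    (h : ∀ᶠ s in 𝓝 (0 : ℝ), x + s • d ∈ S) : d = 0 := by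
  have hneg : ∀ᶠ s in 𝓝 (0 : ℝ), x - s • d ∈ S := by
    simpa [neg_smul, ← sub_eq_add_neg] using
      (continuous_neg.tendsto' (0 : ℝ) 0 neg_zero).eventually h
  obtain ⟨s, ⟨hadd, hsub⟩, hs0⟩ :=
    (((h.and hneg).filter_mono nhdsWithin_le_nhds).and
      (self_mem_nhdsWithin : ∀ᶠ s in 𝓝[≠] (0 : ℝ), s ≠ 0)).exists
  have hfix := (mem_extremePoints.1 hx).2 _ hadd _ hsub (mem_openSegment_add_sub x _)
  exact (smul_eq_zero.1 (add_eq_left.1 hfix.1)).resolve_left hs0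

theorem eventually_nonneg_add_mul {a k : ℝ} (ha : 0 ≤ a) (hk : a = 0 → k = 0) :
    ∀ᶠ s in 𝓝 (0 : ℝ), 0 ≤ a + s * k := by
  rcases ha.eq_or_lt with rfl | ha
  · simp [hk rfl]
  · have hlim : Tendsto (fun s : ℝ => a + s * k) (𝓝 0) (𝓝 a) :=
      ((continuous_id.mul continuous_const).const_add a).tendsto' 0 a (by simp)
    exact (hlim.eventually_const_lt ha).mono fun _ => le_of_lt

noncomputable def signTowardHalf (t : ℝ) : ℝ :=
  if t = 0 ∨ t = 1 then 0 else Real.sign (1 / 2 - t)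

theorem signTowardHalf_eq_zero_iff {t : ℝ} :
    signTowardHalf t = 0 ↔ t = 0 ∨ t = 1 / 2 ∨ t = 1 := by
  unfold signTowardHalf
  split_ifs with h
  · tauto
  · rw [Real.sign_eq_zero_iff, sub_eq_zero, eq_comm]
    tauto

theorem signTowardHalf_one_sub (t : ℝ) : signTowardHalf (1 - t) = -signTowardHalf t := by
  by_cases h : t = 0 ∨ t = 1
  · rcases h with rfl | rfl <;> norm_num [signTowardHalf]
  · have h' : ¬(1 - t = 0 ∨ 1 - t = 1) := by
      contrapose! h
      rcases h with h | h
      · exact Or.inr (by linarith)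
      · exact Or.inl (by linarith)
    have hhalf : 1 / 2 - (1 - t) = -(1 / 2 - t) := by ring
    simp only [signTowardHalf, if_neg h, if_neg h', hhalf, Real.sign_neg]

theorem eventually_add_smul_signTowardHalf_mem_graphPolytope {V : Type*} [Finite V]
    {G : SimpleGraph V} {x : V → ℝ} (hx : x ∈ graphPolytope G) :
    ∀ᶠ s in 𝓝 (0 : ℝ), x + s • (signTowardHalf ∘ x) ∈ graphPolytope G := by
  obtain ⟨hx0, hxE⟩ := hx
  have hvertex : ∀ v, ∀ᶠ s in 𝓝 (0 : ℝ), 0 ≤ x v + s * signTowardHalf (x v) := fun v =>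
    eventually_nonneg_add_mul (hx0 v) fun h => signTowardHalf_eq_zero_iff.2 (Or.inl h)
  have hedge : ∀ u v, G.Adj u v → ∀ᶠ s in 𝓝 (0 : ℝ),
      x u + s * signTowardHalf (x u) + (x v + s * signTowardHalf (x v)) ≤ 1 := by
    intro u v huv
    have htight : 1 - (x u + x v) = 0 →
        -(signTowardHalf (x u) + signTowardHalf (x v)) = 0 := by
      intro h
      rw [show x v = 1 - x u by linarith, signTowardHalf_one_sub]
      ring
    filter_upwards [eventually_nonneg_add_mul (sub_nonneg.2 (hxE u v huv)) htight] with s hs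
    linarith
  filter_upwards [eventually_all.2 hvertex,
    eventually_all.2 fun u => eventually_all.2 fun v => eventually_imp_distrib_left.2 (hedge u v)]
    with s hs hs'
  exact ⟨hs, hs'⟩

theorem graphPolytope_extremePoints_half_integral
    {V : Type*} [Fintype V] (G : SimpleGraph V)
    (x : V → ℝ) (hx : x ∈ Set.extremePoints ℝ (graphPolytope G)) :
    ∀ v, x v = 0 ∨ x v = 1 / 2 ∨ x v = 1 := by
  have hsign : signTowardHalf ∘ x = 0 :=
    eq_zero_of_mem_extremePoints_of_eventually_add_smul_mem hx
      (eventually_add_smul_signTowardHalf_mem_graphPolytope hx.1)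
  exact fun v => signTowardHalf_eq_zero_iff.1 (congrFun hsign v)
end

section
/- For all integers m ≥ 1 and n ≥ 0, the number WL_m(n) of weightings of the path graph L_m with m vertices equals the sum of all entries of the matrix B(n)^{m−1}, where B(n)^0 is the identity matrix. -/
/-- `WG G n` is the number of weightings `α : V → {0,…,n}` of the simple graph `G`
such that `α u + α v ≤ n` for every edge `uv`. -/
noncomputable def WG {V : Type*} [Fintype V] (G : SimpleGraph V) (n : ℕ) : ℕ :=
  Nat.card {α : V → ℕ // (∀ v, α v ≤ n) ∧ ∀ u v, G.Adj u v → α u + α v ≤ n}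

/-- The `(n+1) × (n+1)` 0-1 matrix whose `(i,j)` entry is `1` iff `i + j ≤ n`. -/
def B (n : ℕ) : Matrix (Fin (n + 1)) (Fin (n + 1)) ℕ :=
  Matrix.of fun i j => if (i : ℕ) + (j : ℕ) ≤ n then 1 else 0

/-- Number of valid sequences of length `k+1` starting at `i`. -/
def wP (n k : ℕ) (i : Fin (n + 1)) : ℕ :=
  ∑ g : Fin k → Fin (n + 1), ∏ t : Fin k, B n ((Fin.cons i g : Fin (k+1) → Fin (n+1)) t.castSucc) (g t)

lemma wP_zero (n : ℕ) (i : Fin (n + 1)) : wP n 0 i = 1 := by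
  simp [wP]

lemma wP_succ (n k : ℕ) (i : Fin (n + 1)) :
    wP n (k + 1) i = ∑ l, B n i l * wP n k l := by
  rw [wP]
  rw [← Fintype.sum_equiv (Fin.consEquiv (fun _ : Fin (k+1) => Fin (n+1)))
    (fun p => ∏ t : Fin (k+1), B n ((Fin.cons i (Fin.cons p.1 p.2 : Fin (k+1) → Fin (n+1)) : Fin (k+2) → Fin (n+1)) t.castSucc)
      ((Fin.cons p.1 p.2 : Fin (k+1) → Fin (n+1)) t))
    (fun g => ∏ t : Fin (k+1), B n ((Fin.cons i g : Fin (k+2) → Fin (n+1)) t.castSucc) (g t))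
    (fun p => rfl)]
  rw [Fintype.sum_prod_type]
  refine Finset.sum_congr rfl fun l _ => ?_
  rw [wP, Finset.mul_sum]
  refine Finset.sum_congr rfl fun h _ => ?_
  rw [Fin.prod_univ_succ]
  have e0 : B n ((Fin.cons i (Fin.cons l h : Fin (k+1) → Fin (n+1)) : Fin (k+2) → Fin (n+1))
      (0 : Fin (k+1)).castSucc) ((Fin.cons l h : Fin (k+1) → Fin (n+1)) 0) = B n i l := by
    simp
  rw [e0]
  congr 1

lemma wP_eq (n k : ℕ) (i : Fin (n + 1)) : wP n k i = ∑ j, (B n ^ k) i j := by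
  induction k generalizing i with
  | zero => simp [wP_zero, Matrix.one_apply]
  | succ k ih =>
    rw [wP_succ]
    simp_rw [ih]
    rw [pow_succ']
    simp_rw [Matrix.mul_apply, Finset.mul_sum]
    rw [Finset.sum_comm]

lemma total (n k : ℕ) :
    ∑ f : Fin (k + 1) → Fin (n + 1), ∏ t : Fin k, B n (f t.castSucc) (f t.succ)
      = ∑ i, wP n k i := by
  rw [← Fintype.sum_equiv (Fin.consEquiv (fun _ : Fin (k+1) => Fin (n+1)))
    (fun p => ∏ t : Fin k, B n ((Fin.cons p.1 p.2 : Fin (k+1) → Fin (n+1)) t.castSucc)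
      ((Fin.cons p.1 p.2 : Fin (k+1) → Fin (n+1)) t.succ))
    (fun f => ∏ t : Fin k, B n (f t.castSucc) (f t.succ))
    (fun p => rfl)]
  rw [Fintype.sum_prod_type]
  refine Finset.sum_congr rfl fun i _ => ?_
  rw [wP]
  refine Finset.sum_congr rfl fun g _ => ?_
  refine Finset.prod_congr rfl fun t _ => ?_
  rw [Fin.cons_succ]

theorem path_weightings_eq_sum_entries_of_pow (m : ℕ) (hm : 1 ≤ m) (n : ℕ) :
    WG (SimpleGraph.pathGraph m) n = ∑ i, ∑ j, (B n ^ (m - 1)) i j := by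
  cases m with
  | zero => omega
  | succ k =>
  have hcard : WG (SimpleGraph.pathGraph (k + 1)) n =
      Fintype.card {f : Fin (k + 1) → Fin (n + 1) //
        ∀ t : Fin k, (f t.castSucc : ℕ) + (f t.succ : ℕ) ≤ n} := by
    rw [WG, ← Nat.card_eq_fintype_card]
    refine Nat.card_congr ?_
    refine
      { toFun := fun α => ⟨fun v => ⟨α.1 v, Nat.lt_succ_of_le (α.2.1 v)⟩, ?_⟩
        invFun := fun f => ⟨fun v => (f.1 v : ℕ), ?_, ?_⟩
        left_inv := fun α => rfl
        right_inv := fun f => by ext v; rfl }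
    · intro t
      exact α.2.2 t.castSucc t.succ (SimpleGraph.pathGraph_adj.mpr (Or.inl (by simp)))
    · intro v; exact Nat.lt_succ_iff.mp (f.1 v).isLt
    · intro u v huv
      show (f.1 u : ℕ) + (f.1 v : ℕ) ≤ n
      rcases SimpleGraph.pathGraph_adj.mp huv with h | h
      · have hu : (u : ℕ) < k := by omega
        have := f.2 ⟨u, hu⟩
        have h1 : (Fin.castSucc ⟨u, hu⟩ : Fin (k+1)) = u := by ext; simp
        have h2 : (Fin.succ ⟨u, hu⟩ : Fin (k+1)) = v := by ext; simp; omega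
        rwa [h1, h2] at this
      · have hv : (v : ℕ) < k := by omega
        have := f.2 ⟨v, hv⟩
        have h1 : (Fin.castSucc ⟨v, hv⟩ : Fin (k+1)) = v := by ext; simp
        have h2 : (Fin.succ ⟨v, hv⟩ : Fin (k+1)) = u := by ext; simp; omega
        rw [h1, h2] at this
        omega
  rw [hcard]
  have : Fintype.card {f : Fin (k + 1) → Fin (n + 1) //
        ∀ t : Fin k, (f t.castSucc : ℕ) + (f t.succ : ℕ) ≤ n}
      = ∑ f : Fin (k + 1) → Fin (n + 1), ∏ t : Fin k, B n (f t.castSucc) (f t.succ) := by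
    rw [Fintype.card_subtype, Finset.card_filter]
    refine Finset.sum_congr rfl fun f _ => ?_
    rw [show (∏ t : Fin k, B n (f t.castSucc) (f t.succ))
        = ∏ t : Fin k, if (f t.castSucc : ℕ) + (f t.succ : ℕ) ≤ n then 1 else 0 from rfl,
      Fintype.prod_boole]
    by_cases h : ∀ t : Fin k, (f t.castSucc : ℕ) + (f t.succ : ℕ) ≤ n <;> simp [h]
  rw [this, total]
  simp only [Nat.add_sub_cancel]
  refine Finset.sum_congr rfl fun i _ => ?_
  rw [wP_eq]
end

section
/- For every nonnegative integer n, the number WC_3(n) of triples (a,b,c) with a,b,c ∈ {0,1,…,n} and a+b ≤ n, b+c ≤ n, c+a ≤ n satisfies 16·WC_3(n) = 4n³ + 18n² + 28n + 15 + (−1)^n. -/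
open Finset

/-- `WC3 n` is the number of triples `(a,b,c) ∈ {0,…,n}³` with
`a+b ≤ n`, `b+c ≤ n` and `c+a ≤ n`. -/
noncomputable def WC3 (n : ℕ) : ℕ :=
  Nat.card {t : ℕ × ℕ × ℕ //
    t.1 ≤ n ∧ t.2.1 ≤ n ∧ t.2.2 ≤ n ∧
    t.1 + t.2.1 ≤ n ∧ t.2.1 + t.2.2 ≤ n ∧ t.2.2 + t.1 ≤ n}

namespace WC3Aux

def F (n : ℕ) : Finset (ℕ × ℕ × ℕ) :=
  (range (n+1) ×ˢ range (n+1) ×ˢ range (n+1)).filter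
    (fun t => t.1 + t.2.1 ≤ n ∧ t.2.1 + t.2.2 ≤ n ∧ t.2.2 + t.1 ≤ n)

lemma wc3_eq (n : ℕ) : WC3 n = (F n).card := by
  rw [← Nat.card_eq_finsetCard]
  exact Nat.card_congr (Equiv.subtypeEquivRight (fun t => by
    simp [F, mem_filter, mem_product]; omega))

lemma sum_sub_eq (d N : ℕ) : ∑ a ∈ range N, (a - d) = ∑ j ∈ range (N - d), j := by
  induction N with
  | zero => simp
  | succ N ih =>
    rw [sum_range_succ, ih]
    rcases le_or_gt d N with h | h
    · rw [show N + 1 - d = (N - d) + 1 by omega, sum_range_succ]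
    · have h1 : N + 1 - d = 0 := by omega
      have h2 : N - d = 0 := by omega
      rw [h1, h2]; simp

lemma neg_card (n k : ℕ) (hk : k ≤ n) :
    ((range (k+1) ×ˢ range (k+1)).filter (fun p : ℕ × ℕ => ¬ (p.1 + p.2 ≤ n))).card
      = ∑ j ∈ range (2*k+1-n), j := by
  rw [card_filter, sum_product]
  have h1 : ∀ b ∈ range (k+1),
      (∑ c ∈ range (k+1), if ¬ (b + c ≤ n) then 1 else 0) = b - (n - k) := by
    intro b hb
    have hb' : b ≤ k := by have := mem_range.mp hb; omega
    rw [← card_filter]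
    have : (range (k+1)).filter (fun c => ¬ (b + c ≤ n)) = Finset.Ico (n+1-b) (k+1) := by
      ext c; simp [Finset.mem_Ico]; omega
    rw [this, Nat.card_Ico]
    omega
  rw [sum_congr rfl h1, sum_sub_eq, show k + 1 - (n - k) = 2*k+1-n by omega]

lemma pos_card (n k : ℕ) (hk : k ≤ n) :
    ((range (k+1) ×ˢ range (k+1)).filter (fun p : ℕ × ℕ => p.1 + p.2 ≤ n)).card
      + ∑ j ∈ range (2*k+1-n), j = (k+1)^2 := by
  rw [← neg_card n k hk, card_filter_add_card_filter_not, card_product, card_range]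
  ring

lemma F_card (n : ℕ) : (F n).card = ∑ a ∈ range (n+1),
    ((range (n-a+1) ×ˢ range (n-a+1)).filter (fun p : ℕ × ℕ => p.1 + p.2 ≤ n)).card := by
  rw [F, card_filter, sum_product]
  refine sum_congr rfl fun a ha => ?_
  have ha' : a ≤ n := by have := mem_range.mp ha; omega
  rw [← card_filter]
  congr 1
  ext p
  simp [mem_product]
  omega

lemma F_card_int (n : ℕ) : ((F n).card : ℤ) =
    ∑ k ∈ range (n+1), (((k:ℤ)+1)^2 - ∑ j ∈ range (2*k+1-n), (j:ℤ)) := by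
  rw [F_card,
    ← Finset.sum_range_reflect (fun k => (((k:ℤ)+1)^2 - ∑ j ∈ range (2*k+1-n), (j:ℤ))) (n+1)]
  push_cast
  refine sum_congr rfl fun a ha => ?_
  have ha' : a ≤ n := by have := mem_range.mp ha; omega
  have h := pos_card n (n-a) (by omega)
  have h' := congrArg (fun x : ℕ => (x : ℤ)) h
  push_cast at h'
  linarith

lemma sum_sq (N : ℕ) : (∑ k ∈ range N, ((k:ℤ)+1)^2) * 6 = (N:ℤ)*((N:ℤ)+1)*(2*(N:ℤ)+1) := by
  induction N with
  | zero => simp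
  | succ N ih => rw [sum_range_succ, add_mul, ih]; push_cast; ring

lemma s2i1 (i : ℕ) : ∑ j ∈ range (2*i+1), (j:ℤ) = (i:ℤ)*(2*i+1) := by
  induction i with
  | zero => simp
  | succ i ih =>
    rw [show 2*(i+1)+1 = (2*i+1)+1+1 by ring, sum_range_succ, sum_range_succ, ih]
    push_cast; ring

lemma s2i2 (i : ℕ) : ∑ j ∈ range (2*i+2), (j:ℤ) = ((i:ℤ)+1)*(2*i+1) := by
  rw [show 2*i+2 = (2*i+1)+1 by ring, sum_range_succ, s2i1]
  push_cast; ring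

lemma Beven (m : ℕ) : ∑ k ∈ range (2*m+1), (∑ j ∈ range (2*k+1-2*m), (j:ℤ))
    = ∑ i ∈ range (m+1), (i:ℤ)*(2*i+1) := by
  rw [show 2*m+1 = m + (m+1) by ring, sum_range_add]
  have h1 : ∑ i ∈ range m, (∑ j ∈ range (2*i+1-2*m), (j:ℤ)) = 0 := by
    refine sum_eq_zero fun i hi => ?_
    have : 2*i+1-2*m = 0 := by have := mem_range.mp hi; omega
    simp [this]
  rw [h1, zero_add]
  exact sum_congr rfl fun i _ => by rw [show 2*(m+i)+1-2*m = 2*i+1 by omega, s2i1]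

lemma Bodd (m : ℕ) : ∑ k ∈ range (2*m+2), (∑ j ∈ range (2*k+1-(2*m+1)), (j:ℤ))
    = ∑ i ∈ range (m+1), ((i:ℤ)+1)*(2*i+1) := by
  rw [show 2*m+2 = (m+1) + (m+1) by ring, sum_range_add]
  have h1 : ∑ i ∈ range (m+1), (∑ j ∈ range (2*i+1-(2*m+1)), (j:ℤ)) = 0 := by
    refine sum_eq_zero fun i hi => ?_
    have : 2*i+1-(2*m+1) = 0 := by have := mem_range.mp hi; omega
    simp [this]
  rw [h1, zero_add]
  exact sum_congr rfl fun i _ => by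
    rw [show 2*(m+1+i)+1-(2*m+1) = 2*i+2 by omega, s2i2]

lemma sumA (m : ℕ) : (∑ i ∈ range (m+1), (i:ℤ)*(2*i+1)) * 6 = m*(m+1)*(4*m+5) := by
  induction m with
  | zero => simp
  | succ m ih => rw [sum_range_succ, add_mul, ih]; push_cast; ring

lemma sumB (m : ℕ) : (∑ i ∈ range (m+1), ((i:ℤ)+1)*(2*i+1)) * 6
    = 2*m*(m+1)*(2*m+1) + 9*m*(m+1) + 6*(m+1) := by
  induction m with
  | zero => simp
  | succ m ih => rw [sum_range_succ, add_mul, ih]; push_cast; ring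

lemma even_case (m : ℕ) : 16 * ((F (2*m)).card : ℤ)
    = 32*(m:ℤ)^3 + 72*(m:ℤ)^2 + 56*(m:ℤ) + 16 := by
  have hF := F_card_int (2*m)
  rw [Finset.sum_sub_distrib, Beven m] at hF
  have h1 := sum_sq (2*m+1)
  have h2 := sumA m
  push_cast at h1
  rw [hF]
  linarith

lemma odd_case (m : ℕ) : 16 * ((F (2*m+1)).card : ℤ)
    = 32*(m:ℤ)^3 + 120*(m:ℤ)^2 + 152*(m:ℤ) + 64 := by
  have hF := F_card_int (2*m+1)
  rw [show 2*m+1+1 = 2*m+2 by ring, Finset.sum_sub_distrib, Bodd m] at hF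
  have h1 := sum_sq (2*m+2)
  have h2 := sumB m
  push_cast at h1
  rw [hF]
  linarith

end WC3Aux

theorem WC3_formula (n : ℕ) :
    (16 * WC3 n : ℤ) = 4 * n ^ 3 + 18 * n ^ 2 + 28 * n + 15 + (-1) ^ n := by
  rw [WC3Aux.wc3_eq]
  rcases Nat.even_or_odd n with h | h
  · rw [h.neg_one_pow]
    obtain ⟨m, hm⟩ := h
    have hn : n = 2*m := by omega
    subst hn
    have := WC3Aux.even_case m
    push_cast
    linarith
  · rw [h.neg_one_pow]
    obtain ⟨m, hm⟩ := h
    subst hm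
    have := WC3Aux.odd_case m
    push_cast
    linarith
end

section
/- For all integers t ≥ 1 and n ≥ 0, the number WK_t(n) of t-tuples (n_1,…,n_t) with each n_i ∈ {0,1,…,n} and n_i + n_j ≤ n for all i ≠ j satisfies WK_t(n) = t·∑_{r=1}^{⌊(n+1)/2⌋} r^{t−1} + (⌊(n+2)/2⌋)^t. -/
/-- `WK t n` is the number of `t`-tuples `(n_1,…,n_t)` with each `n_i ∈ {0,…,n}`
and `n_i + n_j ≤ n` whenever `i ≠ j` (the weightings of the complete graph `K_t`). -/
noncomputable def WK (t n : ℕ) : ℕ :=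
  Nat.card {f : Fin t → ℕ // (∀ i, f i ≤ n) ∧ ∀ i j, i ≠ j → f i + f j ≤ n}

theorem WK_formula (t : ℕ) (ht : 1 ≤ t) (n : ℕ) :
    WK t n = t * (∑ r ∈ Finset.Icc 1 ((n + 1) / 2), r ^ (t - 1)) + ((n + 2) / 2) ^ t := by
  classical
  obtain ⟨k, hk⟩ : ∃ k, k = n / 2 := ⟨_, rfl⟩
  have hk1 : 2 * k ≤ n ∧ n ≤ 2 * k + 1 := by omega
  have hkn : k ≤ n := by omega
  have hfinal : ((n + 2) / 2) = k + 1 := by omega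
  -- reindexing lemma, proved first while the context is clean
  have h6 : ∑ v ∈ Finset.Icc (k + 1) n, (n - v + 1) ^ (t - 1)
      = ∑ r ∈ Finset.Icc 1 ((n + 1) / 2), r ^ (t - 1) := by
    refine Finset.sum_nbij' (fun v => n + 1 - v) (fun r => n + 1 - r) ?_ ?_ ?_ ?_ ?_
    · intro v hv; simp only [Finset.mem_Icc] at hv ⊢; omega
    · intro r hr; simp only [Finset.mem_Icc] at hr ⊢; omega
    · intro v hv; simp only [Finset.mem_Icc] at hv; omega
    · intro r hr; simp only [Finset.mem_Icc] at hr; omega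
    · intro v hv; simp only [Finset.mem_Icc] at hv; congr 1; omega
  set S : Finset (Fin t → ℕ) :=
    (Fintype.piFinset fun _ : Fin t => Finset.Iic n).filter
      (fun f => ∀ i j, i ≠ j → f i + f j ≤ n) with hS
  have hmem : ∀ f, f ∈ S ↔ (∀ i, f i ≤ n) ∧ ∀ i j, i ≠ j → f i + f j ≤ n := by
    intro f
    simp [hS, Fintype.mem_piFinset]
  -- small part
  have h3 : (S.filter (fun f => ∀ i, f i ≤ k)) = Fintype.piFinset (fun _ : Fin t => Finset.Iic k) := by
    ext f
    simp only [Finset.mem_filter, Fintype.mem_piFinset, Finset.mem_Iic, hmem]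
    constructor
    · rintro ⟨_, h⟩; exact h
    · intro h
      refine ⟨⟨fun i => le_trans (h i) hkn, fun i j hij => ?_⟩, h⟩
      have ha := h i; have hb := h j
      clear * - ha hb hk1
      omega
  -- big part as a disjoint union over the unique large coordinate
  have h4 : S.filter (fun f => ¬ ∀ i, f i ≤ k)
      = Finset.univ.biUnion (fun i : Fin t => S.filter (fun f => k < f i)) := by
    ext f
    simp only [Finset.mem_filter, Finset.mem_biUnion, Finset.mem_univ, true_and, not_forall,
      not_le]
    tauto
  have hdisj : ∀ i ∈ (Finset.univ : Finset (Fin t)), ∀ j ∈ Finset.univ, i ≠ j →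
      Disjoint (S.filter (fun f => k < f i)) (S.filter (fun f => k < f j)) := by
    intro i _ j _ hij
    rw [Finset.disjoint_left]
    intro f hfi hfj
    rw [Finset.mem_filter] at hfi hfj
    have hsum := ((hmem f).1 hfi.1).2 i j hij
    have ha := hfi.2; have hb := hfj.2
    clear * - hsum ha hb hk1
    omega
  -- cardinality of each piece
  have h5 : ∀ i : Fin t, (S.filter (fun f => k < f i)).card
      = ∑ v ∈ Finset.Icc (k + 1) n, (n - v + 1) ^ (t - 1) := by
    intro i
    have hcard : (S.filter (fun f => k < f i)).card
        = ((Finset.Icc (k + 1) n).sigma (fun v =>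
            Fintype.piFinset (fun j : Fin t =>
              if j = i then ({0} : Finset ℕ) else Finset.Iic (n - v)))).card := by
      refine Finset.card_bij' (fun f _ => ⟨f i, fun j => if j = i then 0 else f j⟩)
        (fun p _ => Function.update p.2 i p.1) ?_ ?_ ?_ ?_
      · intro f hf
        rw [Finset.mem_filter] at hf
        obtain ⟨hfS, hfi⟩ := hf
        obtain ⟨hle, hpair⟩ := (hmem f).1 hfS
        simp only [Finset.mem_sigma, Finset.mem_Icc, Fintype.mem_piFinset]
        refine ⟨⟨hfi, hle i⟩, fun j => ?_⟩
        by_cases hji : j = i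
        · subst hji; simp
        · rw [if_neg hji, if_neg hji, Finset.mem_Iic]
          have hp := hpair j i hji
          have hb := hle j
          clear * - hp hb
          omega
      · intro p hp
        simp only [Finset.mem_sigma, Finset.mem_Icc, Fintype.mem_piFinset] at hp
        obtain ⟨⟨hv1, hv2⟩, hg⟩ := hp
        have hgj : ∀ j : Fin t, j ≠ i → p.2 j ≤ n - p.1 := by
          intro j hji
          have hh := hg j
          rw [if_neg hji, Finset.mem_Iic] at hh
          exact hh
        rw [Finset.mem_filter]
        constructor
        · rw [hmem]
          constructor
          · intro j
            by_cases hji : j = i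
            · subst hji; rw [Function.update_self]; exact hv2
            · rw [Function.update_of_ne hji]
              have ha := hgj j hji
              clear * - ha hv2
              omega
          · intro a b hab
            by_cases hai : a = i
            · subst hai
              rw [Function.update_self, Function.update_of_ne (by tauto)]
              have ha := hgj b (by tauto)
              clear * - ha hv2
              omega
            · rw [Function.update_of_ne hai]
              by_cases hbi : b = i
              · subst hbi
                rw [Function.update_self]
                have ha := hgj a hai
                clear * - ha hv2
                omega
              · rw [Function.update_of_ne hbi]
                have ha := hgj a hai; have hb := hgj b hbi
                clear * - ha hb hv1 hv2 hk1
                omega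
        · rw [Function.update_self]
          clear * - hv1
          omega
      · intro f hf
        dsimp only
        funext j
        by_cases hji : j = i
        · subst hji; simp [Function.update_self]
        · rw [Function.update_of_ne hji]; simp [hji]
      · intro p hp
        simp only [Finset.mem_sigma, Finset.mem_Icc, Fintype.mem_piFinset] at hp
        have hpi : p.2 i = 0 := by
          have := hp.2 i
          simpa using this
        refine Sigma.ext (by simp [Function.update_self]) ?_
        simp only [Function.update_self, heq_eq_eq]
        funext j
        by_cases hji : j = i
        · subst hji; simp [hpi]
        · simp [hji, Function.update_of_ne hji]
    rw [hcard, Finset.card_sigma]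
    refine Finset.sum_congr rfl fun v hv => ?_
    rw [Fintype.card_piFinset]
    have hcc : ∀ j : Fin t, ((if j = i then ({0} : Finset ℕ) else Finset.Iic (n - v)).card)
        = if j = i then 1 else (n - v + 1) := by
      intro j; by_cases hji : j = i <;> simp [hji, Nat.card_Iic]
    rw [Finset.prod_congr rfl (fun j _ => hcc j)]
    rw [← Finset.mul_prod_erase Finset.univ _ (Finset.mem_univ i)]
    rw [if_pos rfl, one_mul]
    rw [Finset.prod_congr rfl (fun j hj => if_neg (Finset.ne_of_mem_erase hj))]
    rw [Finset.prod_const, Finset.card_erase_of_mem (Finset.mem_univ i)]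
    simp
  -- assemble
  have h7 : (S.filter (fun f => ¬ ∀ i, f i ≤ k)).card
      = t * ∑ r ∈ Finset.Icc 1 ((n + 1) / 2), r ^ (t - 1) := by
    rw [h4, Finset.card_biUnion hdisj]
    rw [Finset.sum_congr rfl (fun i _ => (h5 i).trans h6)]
    simp [Finset.sum_const, Finset.card_univ, mul_comm]
  have h3' : (S.filter (fun f => ∀ i, f i ≤ k)).card = (k + 1) ^ t := by
    rw [h3, Fintype.card_piFinset]
    simp [Nat.card_Iic]
  have h2 : (S.filter (fun f => ∀ i, f i ≤ k)).card
      + (S.filter (fun f => ¬ ∀ i, f i ≤ k)).card = S.card :=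
    Finset.card_filter_add_card_filter_not _
  have h1 : WK t n = S.card := by
    rw [WK, ← Nat.card_eq_finsetCard]
    exact Nat.card_congr (Equiv.subtypeEquivRight fun f => (hmem f).symm)
  rw [h1, ← h2, h3', h7, hfinal]
  ring
end

section
/- For every integer t ≥ 1: (a) the number WS_t(n) of weightings of the star graph S_t equals ∑_{k=1}^{n+1} k^t for every n ≥ 0; and (b) as formal power series over ℚ, (∑_{n≥0} WS_t(n) x^{n+1}) · (1−x)^{t+2} = A_t(x). -/
/-- The star graph `S_t` on `t+1` vertices: the hub `0` is adjacent to the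
`t` other vertices, and there are no other edges. -/
def starGraph (t : ℕ) : SimpleGraph (Fin (t + 1)) :=
  SimpleGraph.fromRel (fun u _ => u = 0)

/-- The number of descents of a permutation `σ` of `{0,…,t-1}` (written in one-line
notation `σ 0, σ 1, …, σ (t-1)`): indices `i` with `i+1 < t` and `σ i > σ (i+1)`. -/
noncomputable def descentCount (t : ℕ) (σ : Equiv.Perm (Fin t)) : ℕ :=
  Nat.card {i : Fin t // ∃ h : (i : ℕ) + 1 < t, σ ⟨(i : ℕ) + 1, h⟩ < σ i}

/-- The Eulerian number `A(t,k)`: the number of permutations of `t` letters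
with exactly `k - 1` descents. -/
noncomputable def eulerian (t k : ℕ) : ℕ :=
  Nat.card {σ : Equiv.Perm (Fin t) // descentCount t σ = k - 1}

/-- The Eulerian polynomial `A_t(x) = ∑_{k=1}^{t} A(t,k) xᵏ`, over `ℚ`. -/
noncomputable def eulerianPoly (t : ℕ) : Polynomial ℚ :=
  ∑ k ∈ Finset.Icc 1 t, Polynomial.C (eulerian t k : ℚ) * Polynomial.X ^ k

/-!
Giving the hub weight `a` leaves `n + 1 - a` admissible weights for each leaf, which gives (a).
For (b), multiplying by `1 - x` turns the partial sums `∑_{k ≤ n+1} k^t` back into `∑_m m^t x^m`,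
and `(∑_m m^t x^m) (1 - x)^{t+1} = ∑_σ x^{des σ + 1}` is Worpitzky's identity
`m^t = ∑_σ C(m + t - 1 - des σ, t)` read coefficientwise. To prove Worpitzky's identity, sort a map
`f : [t] → [m]` by `σ = Tuple.sort f`, ties broken by position: `g = f ∘ σ` is weakly increasing and
strictly increasing at the descents of `σ`, so adding to `g i` the number of ascents of `σ` before
`i` gives a strictly increasing map into `[m + t - 1 - des σ]`, and every such map arises once.
-/

open scoped Finset Polynomial

namespace Tuple

variable {n : ℕ} {α : Type*} [LinearOrder α]

theorem eq_sort_iff_strictMono_toLex {f : Fin n → α} {σ : Equiv.Perm (Fin n)} :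
    σ = sort f ↔ StrictMono fun k => toLex (f (σ k), σ k) :=
  eq_sort_iff'

variable (n α) in
def sortEquiv :
    (Fin n → α) ≃
      Σ σ : Equiv.Perm (Fin n), {g : Fin n → α // StrictMono fun k => toLex (g k, σ k)} where
  toFun f := ⟨sort f, f ∘ sort f, eq_sort_iff_strictMono_toLex.1 rfl⟩
  invFun p := p.2.1 ∘ p.1.symm
  left_inv f := by ext; simp
  right_inv := fun ⟨σ, g, hg⟩ => by
    have hσ : σ = sort (g ∘ σ.symm) := eq_sort_iff_strictMono_toLex.2 (by simpa using hg)
    exact Sigma.subtype_ext hσ.symm (by ext; simp [← hσ])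

end Tuple

section Descents

variable {n : ℕ} (σ : Equiv.Perm (Fin (n + 1)))

def ascentsBefore (i : Fin (n + 1)) : ℕ :=
  #{j : Fin n | j.castSucc < i ∧ σ j.castSucc < σ j.succ}

@[simp] lemma ascentsBefore_zero : ascentsBefore σ 0 = 0 := by
  simp [ascentsBefore]

lemma ascentsBefore_succ (i : Fin n) :
    ascentsBefore σ i.succ =
      ascentsBefore σ i.castSucc + if σ i.castSucc < σ i.succ then 1 else 0 := by
  have hle : ∀ j : Fin n, j.castSucc < i.succ ↔ j < i ∨ j = i := fun j => by
    rw [Fin.castSucc_lt_succ_iff, le_iff_lt_or_eq]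
  simp only [ascentsBefore, hle, Fin.castSucc_lt_castSucc_iff, or_and_right, Finset.filter_or]
  rw [Finset.card_union_of_disjoint]
  · split_ifs with h <;> simp [Finset.filter_and, h, Finset.filter_eq']
  · rw [Finset.disjoint_filter]
    rintro j - ⟨hj, -⟩ ⟨rfl, -⟩
    exact lt_irrefl _ hj

lemma ascentsBefore_step (i : Fin n) :
    ascentsBefore σ i.castSucc ≤ ascentsBefore σ i.succ ∧
      ascentsBefore σ i.succ ≤ ascentsBefore σ i.castSucc + 1 := by
  rw [ascentsBefore_succ]
  split_ifs <;> omega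

lemma descentCount_eq_card :
    descentCount (n + 1) σ = #{j : Fin n | σ j.succ < σ j.castSucc} := by
  rw [descentCount, ← Fintype.card_subtype, ← Nat.card_eq_fintype_card]
  exact Nat.card_congr
    { toFun i := ⟨⟨i.1, by have := i.2.1; omega⟩, by obtain ⟨_, h⟩ := i.2; exact h⟩
      invFun j := ⟨j.1.castSucc, by simp, j.2⟩
      left_inv i := rfl
      right_inv j := rfl }

lemma descentCount_le : descentCount (n + 1) σ ≤ n := by
  rw [descentCount_eq_card]
  exact (Finset.card_filter_le _ _).trans_eq (by simp)

lemma ascentsBefore_last : ascentsBefore σ (Fin.last n) = n - descentCount (n + 1) σ := by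
  have h := Finset.card_filter_add_card_filter_not (s := Finset.univ)
    fun j : Fin n => σ j.castSucc < σ j.succ
  have hne : ∀ j : Fin n, ¬σ j.castSucc < σ j.succ ↔ σ j.succ < σ j.castSucc := fun j =>
    not_lt.trans <| le_iff_lt_or_eq.trans <|
      or_iff_left (σ.injective.ne (Fin.castSucc_lt_succ (i := j)).ne')
  simp only [Finset.card_univ, Fintype.card_fin, hne] at h
  rw [descentCount_eq_card, ascentsBefore]
  simp only [Fin.castSucc_lt_last, true_and]
  omega

lemma strictMono_toLex_iff {m : ℕ} (g : Fin (n + 1) → Fin m) :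
    (StrictMono fun k => toLex (g k, σ k)) ↔
      StrictMono fun k => (g k : ℕ) + ascentsBefore σ k := by
  simp only [Fin.strictMono_iff_lt_succ, Prod.Lex.toLex_lt_toLex, ascentsBefore_succ]
  refine forall_congr' fun i => ?_
  have hne : σ i.castSucc ≠ σ i.succ := σ.injective.ne (Fin.castSucc_lt_succ (i := i)).ne
  rw [Fin.lt_def, Fin.ext_iff]
  split_ifs with h
  · have := Fin.le_def.1 h.le
    omega
  · simp only [h, and_false, or_false]
    omega

end Descents

lemma card_strictMono_fin (k N : ℕ) :
    Nat.card {h : Fin k → Fin N // StrictMono h} = N.choose k := by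
  let e : {h : Fin k → Fin N // StrictMono h} ≃ (Fin k ↪o Fin N) :=
    { toFun h := OrderEmbedding.ofStrictMono h.1 h.2
      invFun e := ⟨e, e.strictMono⟩
      left_inv h := rfl
      right_inv e := rfl }
  rw [Nat.card_congr (e.trans Set.powersetCard.ofFinEmbEquiv), Set.powersetCard.card, Nat.card_fin]

section Shift

variable {n m : ℕ} {s : Fin (n + 1) → ℕ} (hs0 : s 0 = 0)
  (hstep : ∀ i : Fin n, s i.castSucc ≤ s i.succ ∧ s i.succ ≤ s i.castSucc + 1)
include hs0 hstep

lemma shift_le_of_strictMono {h : Fin (n + 1) → ℕ} (hh : StrictMono h) (i : Fin (n + 1)) :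
    s i ≤ h i := by
  induction i using Fin.induction with
  | zero => simp [hs0]
  | succ i ih =>
    have := hh (Fin.castSucc_lt_succ (i := i))
    have := (hstep i).2
    omega

lemma monotone_sub_shift_of_strictMono {h : Fin (n + 1) → ℕ} (hh : StrictMono h) :
    Monotone fun i => h i - s i := by
  refine Fin.monotone_iff_le_succ.2 fun i => ?_
  have := hh (Fin.castSucc_lt_succ (i := i))
  have := (hstep i).2
  have := shift_le_of_strictMono hs0 hstep hh i.castSucc
  omega

def strictMonoShiftEquiv :
    {g : Fin (n + 1) → Fin m // StrictMono fun i => (g i : ℕ) + s i} ≃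
      {h : Fin (n + 1) → Fin (m + s (Fin.last n)) // StrictMono h} where
  toFun g := ⟨fun i => ⟨g.1 i + s i, by
      have : s i ≤ s (Fin.last n) :=
        Fin.monotone_iff_le_succ.2 (fun i => (hstep i).1) (Fin.le_last i)
      have := (g.1 i).2
      omega⟩, fun i j hij => g.2 hij⟩
  invFun h := ⟨fun i => ⟨h.1 i - s i, by
      have : (h.1 i : ℕ) - s i ≤ h.1 (Fin.last n) - s (Fin.last n) :=
        monotone_sub_shift_of_strictMono hs0 hstep (h := fun i => (h.1 i : ℕ)) h.2
          (Fin.le_last i)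
      have := shift_le_of_strictMono hs0 hstep (h := fun i => (h.1 i : ℕ)) h.2 (Fin.last n)
      have := (h.1 (Fin.last n)).2
      omega⟩, fun i j hij => by
      have hi := shift_le_of_strictMono hs0 hstep (h := fun i => (h.1 i : ℕ)) h.2 i
      have hj := shift_le_of_strictMono hs0 hstep (h := fun i => (h.1 i : ℕ)) h.2 j
      have : (h.1 i : ℕ) < h.1 j := h.2 hij
      show h.1 i - s i + s i < h.1 j - s j + s j
      omega⟩
  left_inv g := by ext; simp
  right_inv h := by
    ext i
    have := shift_le_of_strictMono hs0 hstep (h := fun i => (h.1 i : ℕ)) h.2 i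
    simp only
    omega

lemma card_strictMono_add_shift :
    Nat.card {g : Fin (n + 1) → Fin m // StrictMono fun i => (g i : ℕ) + s i} =
      (m + s (Fin.last n)).choose (n + 1) := by
  rw [Nat.card_congr (strictMonoShiftEquiv hs0 hstep), card_strictMono_fin]

end Shift

theorem worpitzky (n m : ℕ) :
    m ^ (n + 1) =
      ∑ σ : Equiv.Perm (Fin (n + 1)), (m + (n - descentCount (n + 1) σ)).choose (n + 1) := by
  calc m ^ (n + 1) = Nat.card (Fin (n + 1) → Fin m) := by simp
    _ = ∑ σ : Equiv.Perm (Fin (n + 1)),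
          Nat.card {g : Fin (n + 1) → Fin m // StrictMono fun k => toLex (g k, σ k)} := by
      rw [Nat.card_congr (Tuple.sortEquiv _ _), Nat.card_sigma]
    _ = _ := Finset.sum_congr rfl fun σ _ => by
      rw [← ascentsBefore_last, ← card_strictMono_add_shift (ascentsBefore_zero σ)
        (ascentsBefore_step σ)]
      exact Nat.card_congr (Equiv.subtypeEquivRight (strictMono_toLex_iff σ))

namespace PowerSeries

variable {R : Type*} [CommRing R]

lemma X_mul_mk_sum_Icc (f : ℕ → R) (hf : f 0 = 0) :
    X * mk (fun n => ∑ k ∈ Finset.Icc 1 (n + 1), f k) =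
      mk fun n => ∑ k ∈ Finset.range (n + 1), f k := by
  ext (_ | n)
  · simp [hf]
  · rw [coeff_succ_X_mul, coeff_mk, coeff_mk, Finset.sum_range_succ', hf, add_zero,
      Finset.range_eq_Ico, Finset.sum_Ico_add' f, Finset.Ico_add_one_right_eq_Icc]

lemma mk_sum_range_mul_one_sub (f : ℕ → R) :
    (mk fun n => ∑ k ∈ Finset.range (n + 1), f k) * (1 - X) = mk f := by
  ext n
  cases n <;> simp [mul_sub, Finset.sum_range_succ]

lemma coeff_X_pow_mul_mk_choose {d n : ℕ} (hd : d ≤ n) (m : ℕ) :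
    coeff m (X ^ (d + 1) * mk fun k => ((n + 1 + k).choose (n + 1) : R) : R⟦X⟧) =
      (m + (n - d)).choose (n + 1) := by
  rw [coeff_X_pow_mul', coeff_mk]
  split_ifs with h
  · congr 2
    omega
  · rw [Nat.choose_eq_zero_of_lt (by omega), Nat.cast_zero]

lemma mk_pow_mul_one_sub_pow_eq_sum_descentCount (n : ℕ) :
    (mk fun m => (m : R) ^ (n + 1)) * (1 - X) ^ (n + 2) =
      ∑ σ : Equiv.Perm (Fin (n + 1)), X ^ (descentCount (n + 1) σ + 1) := by
  have h : (mk fun m => (m : R) ^ (n + 1)) =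
      (∑ σ : Equiv.Perm (Fin (n + 1)), X ^ (descentCount (n + 1) σ + 1)) *
        mk fun k => ((n + 1 + k).choose (n + 1) : R) := by
    ext m
    simp only [coeff_mk, Finset.sum_mul, map_sum, coeff_X_pow_mul_mk_choose (descentCount_le _)]
    rw [← Nat.cast_pow, worpitzky n m, Nat.cast_sum]
  rw [h, ← mk_one_pow_eq_mk_choose_add, mul_assoc, ← mul_pow, mk_one_mul_one_sub_eq_one,
    one_pow, mul_one]

end PowerSeries

lemma eulerian_eq_card {n k : ℕ} (hk : 1 ≤ k) :
    eulerian (n + 1) k =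
      #{σ : Equiv.Perm (Fin (n + 1)) | descentCount (n + 1) σ + 1 = k} := by
  rw [eulerian, Nat.card_eq_fintype_card, Fintype.card_subtype]
  congr 1
  ext σ
  simp only [Finset.mem_filter, Finset.mem_univ, true_and]
  omega

lemma sum_X_pow_descentCount_succ (n : ℕ) :
    ∑ σ : Equiv.Perm (Fin (n + 1)), (Polynomial.X : ℚ[X]) ^ (descentCount (n + 1) σ + 1) =
      eulerianPoly (n + 1) := by
  rw [eulerianPoly, ← Finset.sum_fiberwise_of_maps_to
    (g := fun σ => descentCount (n + 1) σ + 1) (t := Finset.Icc 1 (n + 1))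
    (fun σ _ => Finset.mem_Icc.2 ⟨le_add_self, Nat.succ_le_succ (descentCount_le σ)⟩)]
  refine Finset.sum_congr rfl fun k hk => ?_
  rw [Finset.sum_congr rfl fun σ hσ => by rw [(Finset.mem_filter.1 hσ).2], Finset.sum_const,
    eulerian_eq_card (Finset.mem_Icc.1 hk).1, nsmul_eq_mul, map_natCast]

lemma starGraph_isWeighting_iff {t n : ℕ} {α : Fin (t + 1) → ℕ} :
    ((∀ v, α v ≤ n) ∧ ∀ u v, (starGraph t).Adj u v → α u + α v ≤ n) ↔
      α 0 ≤ n ∧ ∀ i : Fin t, α 0 + α i.succ ≤ n := by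
  refine ⟨fun h => ⟨h.1 0, fun i => h.2 0 i.succ ?_⟩,
    fun h => ⟨fun v => ?_, fun u v huv => ?_⟩⟩
  · simp [starGraph, (Fin.succ_ne_zero i).symm]
  · induction v using Fin.cases with
    | zero => exact h.1
    | succ i => have := h.2 i; omega
  · simp only [starGraph, SimpleGraph.fromRel_adj] at huv
    rcases huv with ⟨hne, rfl | rfl⟩
    · obtain ⟨i, rfl⟩ := Fin.exists_succ_eq.2 hne.symm
      exact h.2 i
    · obtain ⟨i, rfl⟩ := Fin.exists_succ_eq.2 hne
      exact (add_comm _ _).trans_le (h.2 i)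

def starGraphWeightingEquiv (t n : ℕ) :
    {α : Fin (t + 1) → ℕ //
        (∀ v, α v ≤ n) ∧ ∀ u v, (starGraph t).Adj u v → α u + α v ≤ n} ≃
      Σ a : Fin (n + 1), Fin t → Fin (n + 1 - a) where
  toFun α :=
    have h := starGraph_isWeighting_iff.1 α.2
    ⟨⟨α.1 0, by omega⟩, fun i =>
      ⟨α.1 i.succ, show α.1 i.succ < n + 1 - α.1 0 by have := h.2 i; omega⟩⟩
  invFun p := ⟨Fin.cons (p.1 : ℕ) fun i => p.2 i, starGraph_isWeighting_iff.2 <| by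
    have := p.1.2
    refine ⟨by simp; omega, fun i => ?_⟩
    have := (p.2 i).2
    simp only [Fin.cons_zero, Fin.cons_succ]
    omega⟩
  left_inv α := Subtype.ext (Fin.cons_self_tail α.1)
  right_inv p := rfl

theorem WG_starGraph (t n : ℕ) : WG (starGraph t) n = ∑ k ∈ Finset.Icc 1 (n + 1), k ^ t := by
  calc WG (starGraph t) n = ∑ a : Fin (n + 1), (n + 1 - a) ^ t := by
        simp [WG, Nat.card_congr (starGraphWeightingEquiv t n)]
    _ = ∑ a ∈ Finset.range (n + 1), (n + 1 - a) ^ t :=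
        Fin.sum_univ_eq_sum_range (fun a => (n + 1 - a) ^ t) _
    _ = ∑ a ∈ Finset.range (n + 1), (a + 1) ^ t := by
        rw [← Finset.sum_range_reflect]
        exact Finset.sum_congr rfl fun a ha => by
          rw [Finset.mem_range] at ha
          congr 1
          omega
    _ = ∑ k ∈ Finset.Icc 1 (n + 1), k ^ t := by
        rw [Finset.range_eq_Ico, Finset.sum_Ico_add' (· ^ t), Finset.Ico_add_one_right_eq_Icc]

theorem star_weightings (t : ℕ) (ht : 1 ≤ t) :
    (∀ n : ℕ, WG (starGraph t) n = ∑ k ∈ Finset.Icc 1 (n + 1), k ^ t) ∧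
    (PowerSeries.X * PowerSeries.mk fun n => (WG (starGraph t) n : ℚ))
        * (1 - PowerSeries.X) ^ (t + 2)
      = (eulerianPoly t : PowerSeries ℚ) := by
  obtain ⟨n, rfl⟩ := Nat.exists_eq_add_of_le' ht
  refine ⟨WG_starGraph (n + 1), ?_⟩
  have hWG : (PowerSeries.mk fun m => (WG (starGraph (n + 1)) m : ℚ)) =
      PowerSeries.mk fun m => ∑ k ∈ Finset.Icc 1 (m + 1), (k : ℚ) ^ (n + 1) := by
    ext m
    simp [WG_starGraph]
  open PowerSeries in
  calc X * mk (fun m => (WG (starGraph (n + 1)) m : ℚ)) * (1 - X) ^ (n + 1 + 2)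
      = X * mk (fun m => ∑ k ∈ Finset.Icc 1 (m + 1), (k : ℚ) ^ (n + 1)) * (1 - X) *
          (1 - X) ^ (n + 2) := by
        rw [hWG]; ring
    _ = ∑ σ : Equiv.Perm (Fin (n + 1)), X ^ (descentCount (n + 1) σ + 1) := by
        rw [X_mul_mk_sum_Icc _ (by simp), mk_sum_range_mul_one_sub,
          mk_pow_mul_one_sub_pow_eq_sum_descentCount]
    _ = (eulerianPoly (n + 1) : PowerSeries ℚ) := by
        rw [← sum_X_pow_descentCount_succ, ← Polynomial.coeToPowerSeries.ringHom_apply, map_sum]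
        simp [Polynomial.coeToPowerSeries.ringHom_apply]
end

section
/- For all integers p, q ≥ 1 and n ≥ 0, the number WK_{p,q}(n) of weightings of the complete bipartite graph K_{p,q} satisfies WK_{p,q}(n) = ∑_{k=0}^{n} ((k+1)^p − k^p) · (n+1−k)^q. -/
open Finset Fintype

section
variable {ι : Type*} [Fintype ι] [DecidableEq ι] [Nonempty ι]

lemma filter_sup_eq_eq_sdiff (k : ℕ) :
    {f ∈ piFinset fun _ : ι => Iic k | univ.sup f = k} =
      (piFinset fun _ : ι => Iic k) \ piFinset fun _ => Iio k := by
  ext f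
  simp only [mem_filter, mem_sdiff, mem_piFinset, mem_Iic, mem_Iio, not_forall, not_lt]
  obtain ⟨i, -, hi⟩ := exists_mem_eq_sup univ univ_nonempty f
  refine and_congr_right fun hle => ⟨fun hsup => ⟨i, hi ▸ hsup.ge⟩, fun ⟨j, hj⟩ => ?_⟩
  exact le_antisymm (Finset.sup_le fun j _ => hle j) (hj.trans (le_sup (mem_univ j)))

lemma card_filter_sup_eq (k : ℕ) :
    #{f ∈ piFinset fun _ : ι => Iic k | univ.sup f = k} = (k + 1) ^ card ι - k ^ card ι := by
  rw [filter_sup_eq_eq_sdiff, card_sdiff_of_subset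
    (piFinset_subset _ _ fun _ => Iio_subset_Iic_self)]
  simp

end

section
variable (X Y : Type*) [Fintype X] [DecidableEq X] [Fintype Y] [DecidableEq Y]

def bipartiteWeightings (n : ℕ) : Finset ((X → ℕ) × (Y → ℕ)) :=
  {x ∈ (piFinset fun _ => Iic n) ×ˢ (piFinset fun _ => Iic n) | ∀ a b, x.1 a + x.2 b ≤ n}

variable {X Y} in
@[simp]
lemma mem_bipartiteWeightings {n : ℕ} {x : (X → ℕ) × (Y → ℕ)} :
    x ∈ bipartiteWeightings X Y n ↔
      ((∀ a, x.1 a ≤ n) ∧ ∀ b, x.2 b ≤ n) ∧ ∀ a b, x.1 a + x.2 b ≤ n := by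
  simp [bipartiteWeightings]

lemma WG_completeBipartiteGraph (n : ℕ) :
    WG (completeBipartiteGraph X Y) n = #(bipartiteWeightings X Y n) := by
  rw [WG, ← Nat.card_eq_finsetCard]
  refine Nat.card_congr (Equiv.subtypeEquiv (Equiv.sumArrowEquivProdArrow X Y ℕ) fun α => ?_)
  simp only [Sum.forall, completeBipartiteGraph_adj]
  simp [add_comm, forall_comm (α := Y)]

lemma filter_bipartiteWeightings_sup_eq [Nonempty X] {n k : ℕ} (hk : k ≤ n) :
    {x ∈ bipartiteWeightings X Y n | univ.sup x.1 = k} =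
      {f ∈ piFinset fun _ : X => Iic k | univ.sup f = k} ×ˢ piFinset fun _ : Y => Iic (n - k) := by
  ext ⟨f, g⟩
  simp only [mem_filter, mem_bipartiteWeightings, mem_product, mem_piFinset, mem_Iic]
  obtain ⟨a₀, -, ha₀⟩ := exists_mem_eq_sup univ univ_nonempty f
  constructor
  · rintro ⟨⟨-, hfg⟩, rfl⟩
    refine ⟨⟨fun a => le_sup (mem_univ a), rfl⟩, fun b => ?_⟩
    have := hfg a₀ b
    omega
  · rintro ⟨⟨hf, rfl⟩, hg⟩
    refine ⟨⟨⟨fun a => (hf a).trans hk, fun b => (hg b).trans (Nat.sub_le _ _)⟩, fun a b => ?_⟩, rfl⟩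
    have := hf a
    have := hg b
    omega

lemma card_bipartiteWeightings [Nonempty X] (n : ℕ) :
    #(bipartiteWeightings X Y n) =
      ∑ k ∈ range (n + 1), ((k + 1) ^ card X - k ^ card X) * (n + 1 - k) ^ card Y := by
  rw [card_eq_sum_card_fiberwise (f := fun x => univ.sup x.1) (t := range (n + 1)) ?_]
  · refine sum_congr rfl fun k hk => ?_
    have hk : k ≤ n := Nat.lt_succ_iff.mp (mem_range.mp hk)
    rw [filter_bipartiteWeightings_sup_eq X Y hk, card_product, card_filter_sup_eq]
    simp [Nat.sub_add_comm hk]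
  · intro x hx
    simp only [mem_coe, mem_range, Nat.lt_succ_iff]
    exact Finset.sup_le fun a _ => (mem_bipartiteWeightings.mp hx).1.1 a

end

theorem complete_bipartite_weightings_general (p q : ℕ) (hp : 1 ≤ p) (n : ℕ) :
    WG (completeBipartiteGraph (Fin p) (Fin q)) n
      = ∑ k ∈ Finset.range (n + 1), ((k + 1) ^ p - k ^ p) * (n + 1 - k) ^ q := by
  have : Nonempty (Fin p) := ⟨⟨0, hp⟩⟩
  rw [WG_completeBipartiteGraph, card_bipartiteWeightings, Fintype.card_fin, Fintype.card_fin]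

theorem complete_bipartite_weightings (p q : ℕ) (hp : 1 ≤ p) (hq : 1 ≤ q) (n : ℕ) :
    WG (completeBipartiteGraph (Fin p) (Fin q)) n
      = ∑ k ∈ Finset.range (n + 1), ((k + 1) ^ p - k ^ p) * (n + 1 - k) ^ q :=
  complete_bipartite_weightings_general p q hp n
end

section
/- For all integers p, q ≥ 1, as formal power series over ℚ, (∑_{n≥0} WK_{p,q}(n) x^n) · (1−x)^{p+q+1} = Ā_p(x) · Ā_q(x), where Ā_t(x) = ∑_{k=0}^{t−1} A(t, k+1) x^k. -/
/-- The shifted Eulerian polynomial `Ā_t(x) = ∑_{k=0}^{t-1} A(t,k+1) xᵏ`, over `ℚ`. -/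
noncomputable def eulerianPolyShifted (t : ℕ) : Polynomial ℚ :=
  ∑ k ∈ Finset.range t, Polynomial.C (eulerian t (k + 1) : ℚ) * Polynomial.X ^ k

open Finset Polynomial PowerSeries

attribute [local instance] Classical.propDecidable

-- chain helper
lemma chain_of_adj {t : ℕ} {P : Fin t → Fin t → Prop}
    (htrans : ∀ a b c : Fin t, P a b → P b c → P a c)
    (hadj : ∀ (i : ℕ) (h1 : i + 1 < t), P ⟨i, Nat.lt_of_succ_lt h1⟩ ⟨i + 1, h1⟩) :
    ∀ i j : Fin t, i < j → P i j := by
  suffices H : ∀ k (i j : Fin t), (j : ℕ) = (i : ℕ) + k + 1 → P i j by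
    intro i j hij
    exact H ((j : ℕ) - (i : ℕ) - 1) i j (by have := Fin.lt_iff_val_lt_val.mp hij; omega)
  intro k
  induction k with
  | zero =>
      intro i j hj
      have h1 : (i : ℕ) + 1 < t := by have := j.isLt; omega
      have hje : j = ⟨(i : ℕ) + 1, h1⟩ := Fin.ext (by simp only [Fin.val_mk]; omega)
      rw [hje]
      exact hadj i.val h1
  | succ k ih =>
      intro i j hj
      have hmid : (i : ℕ) + k + 1 < t := by have := j.isLt; omega
      set mid : Fin t := ⟨(i : ℕ) + k + 1, hmid⟩ with hm
      have h1 : (mid : ℕ) + 1 < t := by have := j.isLt; simp [hm]; omega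
      have hje : j = ⟨(mid : ℕ) + 1, h1⟩ := Fin.ext (by simp only [hm, Fin.val_mk]; omega)
      refine htrans i mid j (ih i mid (by simp [hm])) ?_
      rw [hje]
      exact hadj mid.val h1

-- gap lemma for strictly monotone ℕ-valued functions on Fin t
lemma strictMono_gap {t : ℕ} {f : Fin t → ℕ}
    (hf : ∀ (i : ℕ) (h1 : i + 1 < t), f ⟨i, Nat.lt_of_succ_lt h1⟩ < f ⟨i + 1, h1⟩) :
    ∀ i j : Fin t, i ≤ j → f i + ((j : ℕ) - (i : ℕ)) ≤ f j := by
  intro i j hij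
  rcases eq_or_lt_of_le hij with rfl | hlt
  · simp
  · refine chain_of_adj (P := fun a b => f a + ((b : ℕ) - (a : ℕ)) ≤ f b) ?_ ?_ i j hlt
    · intro a b c hab hbc
      omega
    · intro i h1
      have := hf i h1
      simp only
      omega

-- counting strictly monotone functions
lemma card_strictMono_fun (t m : ℕ) :
    (univ.filter fun h : Fin t → Fin m => StrictMono h).card = m.choose t := by
  have h1 : ((univ : Finset (Fin m)).powersetCard t).card = m.choose t := by
    rw [Finset.card_powersetCard, card_univ, Fintype.card_fin]
  rw [← h1]
  refine Finset.card_bij' (fun h _ => Finset.image h univ)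
    (fun s hs => (s.orderEmbOfFin (by
      rw [Finset.mem_powersetCard] at hs
      exact hs.2) : Fin t → Fin m)) ?_ ?_ ?_ ?_
  · intro h hh
    simp only [mem_filter, mem_univ, true_and] at hh
    rw [Finset.mem_powersetCard]
    exact ⟨Finset.subset_univ _, by
      rw [Finset.card_image_of_injective _ hh.injective, card_univ, Fintype.card_fin]⟩
  · intro s hs
    simp only [mem_filter, mem_univ, true_and]
    exact (s.orderEmbOfFin _).strictMono
  · intro h hh
    simp only [mem_filter, mem_univ, true_and] at hh
    exact (Finset.orderEmbOfFin_unique _ (fun x => Finset.mem_image_of_mem h (mem_univ x))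
      hh).symm
  · intro s hs
    apply Finset.coe_injective
    rw [Finset.coe_image, Finset.coe_univ, Set.image_univ, Finset.range_orderEmbOfFin]

noncomputable def descFinset (t : ℕ) (σ : Equiv.Perm (Fin t)) : Finset (Fin t) :=
  univ.filter fun i => ∃ h : (i : ℕ) + 1 < t, σ ⟨(i : ℕ) + 1, h⟩ < σ i

lemma descentCount_eq_card_s17 (t : ℕ) (σ : Equiv.Perm (Fin t)) :
    descentCount t σ = (descFinset t σ).card := by
  rw [descentCount, Nat.card_eq_fintype_card, Fintype.card_subtype, descFinset]

section cfun
variable {t' : ℕ} (σ : Equiv.Perm (Fin (t' + 1)))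

lemma descFinset_subset : descFinset (t' + 1) σ ⊆ Finset.Iio (Fin.last t') := by
  intro i hi
  rw [descFinset, mem_filter] at hi
  obtain ⟨-, h, -⟩ := hi
  rw [Finset.mem_Iio, Fin.lt_iff_val_lt_val, Fin.val_last]
  omega

lemma descFinset_card_le : (descFinset (t' + 1) σ).card ≤ t' := by
  have := Finset.card_le_card (descFinset_subset σ)
  rwa [Fin.card_Iio, Fin.val_last] at this

/-- number of non-descents strictly below `i` -/
noncomputable def cfun (i : Fin (t' + 1)) : ℕ := ((Finset.Iio i) \ descFinset (t' + 1) σ).card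

lemma cfun_le (i : Fin (t' + 1)) : cfun σ i ≤ (i : ℕ) := by
  have := Finset.card_le_card (Finset.sdiff_subset
    (s := Finset.Iio i) (t := descFinset (t' + 1) σ))
  rwa [Fin.card_Iio] at this

lemma cfun_ge (i : Fin (t' + 1)) : (i : ℕ) - (descFinset (t' + 1) σ).card ≤ cfun σ i := by
  have := Finset.le_card_sdiff (descFinset (t' + 1) σ) (Finset.Iio i)
  rwa [Fin.card_Iio] at this

lemma cfun_last : cfun σ (Fin.last t') = t' - (descFinset (t' + 1) σ).card := by
  rw [cfun, Finset.card_sdiff_of_subset (descFinset_subset σ), Fin.card_Iio, Fin.val_last]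

lemma cfun_succ (i : ℕ) (h1 : i + 1 < t' + 1) :
    cfun σ ⟨i + 1, h1⟩ = cfun σ ⟨i, Nat.lt_of_succ_lt h1⟩
      + (if (⟨i, Nat.lt_of_succ_lt h1⟩ : Fin (t' + 1)) ∈ descFinset (t' + 1) σ then 0 else 1) := by
  set i0 : Fin (t' + 1) := ⟨i, Nat.lt_of_succ_lt h1⟩ with hi0
  have hIio : Finset.Iio (⟨i + 1, h1⟩ : Fin (t' + 1)) = insert i0 (Finset.Iio i0) := by
    ext j
    simp only [Finset.mem_Iio, Finset.mem_insert, Fin.lt_iff_val_lt_val, Fin.val_mk, hi0,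
      Fin.ext_iff]
    omega
  rw [cfun, hIio]
  by_cases hd : i0 ∈ descFinset (t' + 1) σ
  · rw [Finset.insert_sdiff_of_mem _ hd, if_pos hd, cfun, add_zero]
  · rw [Finset.insert_sdiff_of_notMem _ hd, if_neg hd,
      Finset.card_insert_of_notMem (by simp), cfun]

end cfun

section stepc
variable {t' n : ℕ} (σ : Equiv.Perm (Fin (t' + 1)))

lemma mem_descFinset {i : Fin (t' + 1)} :
    i ∈ descFinset (t' + 1) σ ↔ ∃ h : (i : ℕ) + 1 < t' + 1, σ ⟨(i : ℕ) + 1, h⟩ < σ i := by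
  simp [descFinset]

lemma cfun_succ' (i : Fin (t' + 1)) (h1 : (i : ℕ) + 1 < t' + 1) :
    cfun σ ⟨(i : ℕ) + 1, h1⟩ = cfun σ i
      + (if i ∈ descFinset (t' + 1) σ then 0 else 1) := by
  have := cfun_succ σ i.val h1
  simpa [Fin.eta] using this

lemma step_c :
    (univ.filter fun g : Fin (t' + 1) → Fin (n + 1) =>
        Monotone g ∧ ∀ (i : Fin (t' + 1)) (h1 : (i : ℕ) + 1 < t' + 1),
          σ ⟨(i : ℕ) + 1, h1⟩ < σ i → g i < g ⟨(i : ℕ) + 1, h1⟩).card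
      = (univ.filter fun h : Fin (t' + 1) → Fin (n + (t' + 1) - (descFinset (t' + 1) σ).card) =>
          StrictMono h).card := by
  have hd : (descFinset (t' + 1) σ).card ≤ t' := descFinset_card_le σ
  -- adjacency for the forward map
  have hFadjgen : ∀ g : Fin (t' + 1) → Fin (n + 1), Monotone g →
      (∀ (i : Fin (t' + 1)) (h1 : (i : ℕ) + 1 < t' + 1),
        σ ⟨(i : ℕ) + 1, h1⟩ < σ i → g i < g ⟨(i : ℕ) + 1, h1⟩) →
      ∀ (i : ℕ) (h1 : i + 1 < t' + 1),
        (g ⟨i, Nat.lt_of_succ_lt h1⟩ : ℕ) + cfun σ ⟨i, Nat.lt_of_succ_lt h1⟩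
          < (g ⟨i + 1, h1⟩ : ℕ) + cfun σ ⟨i + 1, h1⟩ := by
    intro g hmono hstrict i h1
    have hsucc := cfun_succ σ i h1
    by_cases hdm : (⟨i, Nat.lt_of_succ_lt h1⟩ : Fin (t' + 1)) ∈ descFinset (t' + 1) σ
    · obtain ⟨h1', hσ⟩ := (mem_descFinset σ).mp hdm
      have hgl := hstrict ⟨i, Nat.lt_of_succ_lt h1⟩ h1' hσ
      rw [if_pos hdm] at hsucc
      rw [Fin.lt_iff_val_lt_val] at hgl
      simp only [Fin.val_mk] at hgl
      omega
    · have hgl : g ⟨i, Nat.lt_of_succ_lt h1⟩ ≤ g ⟨i + 1, h1⟩ :=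
        hmono (by rw [Fin.le_def]; simp only [Fin.val_mk]; omega)
      rw [if_neg hdm] at hsucc
      rw [Fin.le_def] at hgl
      omega
  -- forward bound
  have fwd : ∀ g : Fin (t' + 1) → Fin (n + 1), Monotone g →
      (∀ (i : Fin (t' + 1)) (h1 : (i : ℕ) + 1 < t' + 1),
        σ ⟨(i : ℕ) + 1, h1⟩ < σ i → g i < g ⟨(i : ℕ) + 1, h1⟩) →
      ∀ k, (g k : ℕ) + cfun σ k < n + (t' + 1) - (descFinset (t' + 1) σ).card := by
    intro g hmono hstrict k
    have hgap := strictMono_gap (f := fun k => (g k : ℕ) + cfun σ k)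
      (hFadjgen g hmono hstrict) k (Fin.last t') (Fin.le_last k)
    have hlast := cfun_last σ
    have hgle := (g (Fin.last t')).isLt
    simp only [Fin.val_last] at hgap
    omega
  -- backward bounds
  have bwd : ∀ h : Fin (t' + 1) → Fin (n + (t' + 1) - (descFinset (t' + 1) σ).card),
      StrictMono h → ∀ k, cfun σ k ≤ (h k : ℕ) ∧ (h k : ℕ) - cfun σ k ≤ n := by
    intro h hh k
    have hadj : ∀ (i : ℕ) (h1 : i + 1 < t' + 1),
        (h ⟨i, Nat.lt_of_succ_lt h1⟩ : ℕ) < (h ⟨i + 1, h1⟩ : ℕ) := by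
      intro i h1
      have := hh (a := ⟨i, Nat.lt_of_succ_lt h1⟩) (b := ⟨i + 1, h1⟩)
        (by rw [Fin.lt_def]; simp only [Fin.val_mk]; omega)
      rwa [Fin.lt_iff_val_lt_val] at this
    have hgap0 := strictMono_gap (f := fun k => (h k : ℕ)) hadj ⟨0, Nat.succ_pos t'⟩ k
      (by rw [Fin.le_def]; simp only [Fin.val_mk]; omega)
    have hgapl := strictMono_gap (f := fun k => (h k : ℕ)) hadj k (Fin.last t') (Fin.le_last k)
    have hlt := (h (Fin.last t')).isLt
    have hck := cfun_le σ k
    have hck2 := cfun_ge σ k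
    have hkval := k.isLt
    simp only [Fin.val_mk, Fin.val_last] at hgap0 hgapl hlt hck hck2 ⊢
    constructor <;> omega
  refine Finset.card_bij'
    (fun g hg => fun k => (⟨(g k : ℕ) + cfun σ k, by
      simp only [mem_filter, mem_univ, true_and] at hg
      exact fwd g hg.1 hg.2 k⟩ : Fin (n + (t' + 1) - (descFinset (t' + 1) σ).card)))
    (fun h hh => fun k => (⟨(h k : ℕ) - cfun σ k, by
      simp only [mem_filter, mem_univ, true_and] at hh
      have := (bwd h hh k).2
      omega⟩ : Fin (n + 1))) ?_ ?_ ?_ ?_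
  · -- forward map is strictly monotone
    intro g hg
    simp only [mem_filter, mem_univ, true_and] at hg ⊢
    intro a b hab
    rw [Fin.lt_def]
    simp only [Fin.val_mk]
    exact chain_of_adj (P := fun a b : Fin (t' + 1) =>
      (g a : ℕ) + cfun σ a < (g b : ℕ) + cfun σ b) (fun a b c h1 h2 => by omega)
      (hFadjgen g hg.1 hg.2) a b hab
  · -- backward map is monotone and satisfies the descent condition
    intro h hh
    simp only [mem_filter, mem_univ, true_and] at hh ⊢
    have hadj : ∀ (i : ℕ) (h1 : i + 1 < t' + 1),
        (h ⟨i, Nat.lt_of_succ_lt h1⟩ : ℕ) < (h ⟨i + 1, h1⟩ : ℕ) := by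
      intro i h1
      have := hh (a := ⟨i, Nat.lt_of_succ_lt h1⟩) (b := ⟨i + 1, h1⟩)
        (by rw [Fin.lt_def]; simp only [Fin.val_mk]; omega)
      rwa [Fin.lt_iff_val_lt_val] at this
    constructor
    · -- monotone
      intro a b hab
      rcases eq_or_lt_of_le hab with rfl | hlt
      · exact le_refl _
      rw [Fin.le_def]
      simp only [Fin.val_mk]
      refine chain_of_adj (P := fun a b : Fin (t' + 1) =>
        (h a : ℕ) - cfun σ a ≤ (h b : ℕ) - cfun σ b) ?_ ?_ a b hlt
      · intro a b c h1 h2; omega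
      · intro i h1
        have hsucc := cfun_succ σ i h1
        have hstep := hadj i h1
        have hc1 := (bwd h hh ⟨i, Nat.lt_of_succ_lt h1⟩).1
        split at hsucc <;> omega
    · -- strict at descents
      intro i h1 hσ
      have hdm : i ∈ descFinset (t' + 1) σ := (mem_descFinset σ).mpr ⟨h1, hσ⟩
      have hsucc := cfun_succ' σ i h1
      rw [if_pos hdm] at hsucc
      have hstep : (h i : ℕ) < (h ⟨(i : ℕ) + 1, h1⟩ : ℕ) := by
        have := hh (a := i) (b := ⟨(i : ℕ) + 1, h1⟩)
          (by rw [Fin.lt_def]; simp only [Fin.val_mk]; omega)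
        rwa [Fin.lt_iff_val_lt_val] at this
      have hc1 := (bwd h hh i).1
      rw [Fin.lt_def]
      simp only [Fin.val_mk] at hsucc hstep hc1 ⊢
      omega
  · -- left inverse
    intro g hg
    funext k
    apply Fin.ext
    simp
  · -- right inverse
    intro h hh
    simp only [mem_filter, mem_univ, true_and] at hh
    funext k
    apply Fin.ext
    have := (bwd h hh k).1
    simp only [Fin.val_mk]
    omega

end stepc

lemma step_b {t n : ℕ} (σ : Equiv.Perm (Fin t)) :
    (univ.filter fun f : Fin t → Fin (n + 1) => Tuple.sort f = σ).card
      = (univ.filter fun g : Fin t → Fin (n + 1) =>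
          Monotone g ∧ ∀ (i : Fin t) (h1 : (i : ℕ) + 1 < t),
            σ ⟨(i : ℕ) + 1, h1⟩ < σ i → g i < g ⟨(i : ℕ) + 1, h1⟩).card := by
  refine Finset.card_bij' (fun f _ => f ∘ σ) (fun g _ => g ∘ ⇑σ⁻¹) ?_ ?_ ?_ ?_
  · intro f hf
    simp only [mem_filter, mem_univ, true_and] at hf ⊢
    obtain ⟨hmono, htie⟩ := Tuple.eq_sort_iff.mp hf.symm
    refine ⟨hmono, ?_⟩
    intro i h1 hσ
    have hilt : i < (⟨(i : ℕ) + 1, h1⟩ : Fin t) := by rw [Fin.lt_def]; simp only [Fin.val_mk]; omega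
    have hle : (f ∘ σ) i ≤ (f ∘ σ) ⟨(i : ℕ) + 1, h1⟩ := hmono hilt.le
    rcases lt_or_eq_of_le hle with h | h
    · exact h
    · exact absurd (htie i ⟨(i : ℕ) + 1, h1⟩ hilt h) (asymm hσ)
  · intro g hg
    simp only [mem_filter, mem_univ, true_and] at hg ⊢
    obtain ⟨hmono, hadj⟩ := hg
    symm
    have hcomp : (g ∘ ⇑σ⁻¹) ∘ ⇑σ = g := funext fun x => by simp
    refine Tuple.eq_sort_iff.mpr ⟨by rw [hcomp]; exact hmono, ?_⟩
    intro i j hij heq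
    have hP : ∀ a b : Fin t, a < b → (g a < g b ∨ (g a = g b ∧ σ a < σ b)) := by
      refine chain_of_adj ?_ ?_
      · rintro a b c (h1 | ⟨h1, h1'⟩) (h2 | ⟨h2, h2'⟩)
        · exact Or.inl (h1.trans h2)
        · exact Or.inl (lt_of_lt_of_le h1 h2.le)
        · exact Or.inl (lt_of_le_of_lt h1.le h2)
        · exact Or.inr ⟨h1.trans h2, h1'.trans h2'⟩
      · intro i h1
        by_cases hσd : σ ⟨i + 1, h1⟩ < σ ⟨i, Nat.lt_of_succ_lt h1⟩
        · exact Or.inl (hadj ⟨i, Nat.lt_of_succ_lt h1⟩ (by simpa using h1) (by simpa using hσd))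
        · have hle : g ⟨i, Nat.lt_of_succ_lt h1⟩ ≤ g ⟨i + 1, h1⟩ :=
            hmono (by rw [Fin.le_def]; simp only [Fin.val_mk]; omega)
          rcases lt_or_eq_of_le hle with h | h
          · exact Or.inl h
          · refine Or.inr ⟨h, lt_of_le_of_ne (not_lt.mp hσd) ?_⟩
            intro hc
            exact absurd (σ.injective hc) (by simp [Fin.ext_iff])
    have heq' : g i = g j := by
      have : (g ∘ ⇑σ⁻¹) (σ i) = g i := by simp
      have h2 : (g ∘ ⇑σ⁻¹) (σ j) = g j := by simp
      rw [this, h2] at heq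
      exact heq
    rcases hP i j hij with h | h
    · rw [heq'] at h; exact absurd h (lt_irrefl _)
    · exact h.2
  · intro f hf
    funext x
    simp
  · intro g hg
    funext x
    simp

theorem worpitzky_s17 (t : ℕ) (ht : 1 ≤ t) (n : ℕ) :
    (n + 1) ^ t = ∑ i ∈ range t, eulerian t (i + 1) * (n + t - i).choose t := by
  obtain ⟨t', rfl⟩ : ∃ t'', t = t'' + 1 := ⟨t - 1, by omega⟩
  have h0 : (n + 1) ^ (t' + 1) = (univ : Finset (Fin (t' + 1) → Fin (n + 1))).card := by
    rw [card_univ, Fintype.card_fun]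
    simp
  have h1 : (univ : Finset (Fin (t' + 1) → Fin (n + 1))).card
      = ∑ σ ∈ (univ : Finset (Equiv.Perm (Fin (t' + 1)))),
          (univ.filter fun f : Fin (t' + 1) → Fin (n + 1) => Tuple.sort f = σ).card :=
    Finset.card_eq_sum_card_fiberwise (fun f _ => mem_univ _)
  have h2 : ∀ σ : Equiv.Perm (Fin (t' + 1)),
      (univ.filter fun f : Fin (t' + 1) → Fin (n + 1) => Tuple.sort f = σ).card
        = (n + (t' + 1) - descentCount (t' + 1) σ).choose (t' + 1) := by
    intro σ
    rw [step_b σ, step_c σ, _root_.card_strictMono_fun, descentCount_eq_card_s17]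
  rw [h0, h1, Finset.sum_congr rfl (fun σ _ => h2 σ)]
  have hmaps : ∀ σ ∈ (univ : Finset (Equiv.Perm (Fin (t' + 1)))),
      descentCount (t' + 1) σ ∈ range (t' + 1) := by
    intro σ _
    rw [mem_range, descentCount_eq_card_s17]
    have := descFinset_card_le σ
    omega
  rw [← Finset.sum_fiberwise_of_maps_to hmaps
    (fun σ => (n + (t' + 1) - descentCount (t' + 1) σ).choose (t' + 1))]
  apply Finset.sum_congr rfl
  intro k hk
  rw [Finset.sum_congr rfl (fun σ hσ => by rw [(mem_filter.mp hσ).2]),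
    Finset.sum_const, smul_eq_mul]
  have : eulerian (t' + 1) (k + 1)
      = (univ.filter fun σ : Equiv.Perm (Fin (t' + 1)) => descentCount (t' + 1) σ = k).card := by
    rw [eulerian, Nat.card_eq_fintype_card, Fintype.card_subtype]
    simp
  rw [this]


-- counting bounded functions
lemma card_lt_fun (k m c : ℕ) (hc : c ≤ m + 1) :
    (univ.filter fun g : Fin k → Fin (m + 1) => ∀ b, (g b : ℕ) < c).card = c ^ k := by
  have : (univ.filter fun g : Fin k → Fin (m + 1) => ∀ b, (g b : ℕ) < c).card
      = Fintype.card {g : Fin k → Fin (m + 1) // ∀ b, (g b : ℕ) < c} := by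
    rw [Fintype.card_subtype]
  rw [this]
  have e : {g : Fin k → Fin (m + 1) // ∀ b, (g b : ℕ) < c} ≃ (Fin k → Fin c) :=
    { toFun := fun g b => ⟨(g.1 b : ℕ), g.2 b⟩
      invFun := fun g => ⟨fun b => ⟨(g b : ℕ), lt_of_lt_of_le (g b).2 hc⟩, fun b => (g b).2⟩
      left_inv := fun g => Subtype.ext (funext fun b => Fin.ext rfl)
      right_inv := fun g => funext fun b => Fin.ext rfl }
  rw [Fintype.card_congr e]
  simp [Fintype.card_fun]

theorem WG_eq (p q n : ℕ) (hp : 1 ≤ p) (hq : 1 ≤ q) :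
    (WG (completeBipartiteGraph (Fin p) (Fin q)) n : ℚ)
      = ∑ s ∈ range (n + 1),
          (((s : ℚ) + 1) ^ p - (s : ℚ) ^ p) * (((n - s : ℕ) : ℚ) + 1) ^ q := by
  classical
  set a₀ : Fin p := ⟨0, hp⟩
  set b₀ : Fin q := ⟨0, hq⟩
  set C : (Fin p → Fin (n + 1)) × (Fin q → Fin (n + 1)) → Prop :=
    fun x => ∀ a b, (x.1 a : ℕ) + (x.2 b : ℕ) ≤ n with hC
  -- step 1: reduce Nat.card to a Finset count
  have e1 : {α : Fin p ⊕ Fin q → ℕ //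
        (∀ v, α v ≤ n) ∧ ∀ u v, (completeBipartiteGraph (Fin p) (Fin q)).Adj u v → α u + α v ≤ n}
      ≃ {x : (Fin p → Fin (n + 1)) × (Fin q → Fin (n + 1)) // C x} :=
    { toFun := fun α => ⟨(fun a => ⟨α.1 (Sum.inl a), Nat.lt_succ_of_le (α.2.1 _)⟩,
        fun b => ⟨α.1 (Sum.inr b), Nat.lt_succ_of_le (α.2.1 _)⟩),
        fun a b => α.2.2 (Sum.inl a) (Sum.inr b) (by simp [completeBipartiteGraph])⟩
      invFun := fun x => ⟨Sum.elim (fun a => (x.1.1 a : ℕ)) (fun b => (x.1.2 b : ℕ)), by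
        refine ⟨?_, ?_⟩
        · rintro (a | b)
          · exact le_trans (Nat.le_add_right _ _) (x.2 a b₀)
          · exact le_trans (Nat.le_add_left _ _) (x.2 a₀ b)
        · rintro (a | b) (a' | b') hadj
          · simp [completeBipartiteGraph] at hadj
          · exact x.2 a b'
          · exact le_trans (le_of_eq (Nat.add_comm _ _)) (x.2 a' b)
          · simp [completeBipartiteGraph] at hadj⟩
      left_inv := fun α => Subtype.ext (funext fun v => by rcases v with a | b <;> rfl)
      right_inv := fun x => Subtype.ext (Prod.ext (funext fun a => Fin.ext rfl)
        (funext fun b => Fin.ext rfl)) }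
  have h1 : WG (completeBipartiteGraph (Fin p) (Fin q)) n = (univ.filter C).card := by
    rw [WG, Nat.card_congr e1, Nat.card_eq_fintype_card, Fintype.card_subtype]
  -- step 2: fiber over the sup of the first component
  set m : (Fin p → Fin (n + 1)) × (Fin q → Fin (n + 1)) → ℕ :=
    fun x => univ.sup (fun a => (x.1 a : ℕ)) with hm
  have hmem : ∀ x ∈ univ.filter C, m x ∈ range (n + 1) := by
    intro x hx
    simp only [mem_filter] at hx
    rw [mem_range, Nat.lt_succ_iff, hm]
    apply Finset.sup_le
    intro a _
    exact le_trans (Nat.le_add_right _ _) (hx.2 a b₀)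
  have h2 : (univ.filter C).card
      = ∑ s ∈ range (n + 1), ((univ.filter C).filter fun x => m x = s).card :=
    Finset.card_eq_sum_card_fiberwise hmem
  -- step 3: each fiber is a product
  have h3 : ∀ s ∈ range (n + 1),
      ((univ.filter C).filter fun x => m x = s)
        = (univ.filter fun f : Fin p → Fin (n + 1) => univ.sup (fun a => (f a : ℕ)) = s) ×ˢ
          (univ.filter fun g : Fin q → Fin (n + 1) => ∀ b, (g b : ℕ) ≤ n - s) := by
    intro s hs
    rw [mem_range, Nat.lt_succ_iff] at hs
    ext x
    simp only [mem_filter, mem_product, mem_univ, true_and, filter_filter, hC, hm]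
    constructor
    · rintro ⟨hc, hsup⟩
      refine ⟨hsup, fun b => ?_⟩
      obtain ⟨a, -, ha⟩ := Finset.exists_mem_eq_sup univ ⟨a₀, mem_univ _⟩ (fun a => (x.1 a : ℕ))
      have := hc a b
      omega
    · rintro ⟨hsup, hb⟩
      refine ⟨fun a b => ?_, hsup⟩
      have h4 : (x.1 a : ℕ) ≤ s := hsup ▸ Finset.le_sup (f := fun a => ((x.1 a : ℕ))) (mem_univ a)
      have := hb b
      omega
  -- step 4: count each factor
  have hA : ∀ s, s ≤ n →
      (univ.filter fun f : Fin p → Fin (n + 1) => univ.sup (fun a => (f a : ℕ)) = s).card + s ^ p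
        = (s + 1) ^ p := by
    intro s hs
    have hunion : (univ.filter fun f : Fin p → Fin (n + 1) => univ.sup (fun a => (f a : ℕ)) = s)
          ∪ (univ.filter fun f => ∀ a, (f a : ℕ) < s)
        = univ.filter fun f => ∀ a, (f a : ℕ) ≤ s := by
      ext f
      simp only [mem_union, mem_filter, mem_univ, true_and]
      obtain ⟨a, -, ha⟩ := Finset.exists_mem_eq_sup univ ⟨a₀, mem_univ _⟩ (fun a => (f a : ℕ))
      constructor
      · rintro (hsup | hlt)
        · intro a'
          exact hsup ▸ Finset.le_sup (f := fun a => ((f a : ℕ))) (mem_univ a')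
        · intro a'; exact le_of_lt (hlt a')
      · intro hle
        rcases eq_or_lt_of_le (ha ▸ Finset.sup_le (fun a' _ => hle a') :
            univ.sup (fun a => (f a : ℕ)) ≤ s) with h | h
        · exact Or.inl h
        · exact Or.inr fun a' =>
            lt_of_le_of_lt (Finset.le_sup (f := fun a => ((f a : ℕ))) (mem_univ a')) h
    have hdisj : Disjoint
        (univ.filter fun f : Fin p → Fin (n + 1) => univ.sup (fun a => (f a : ℕ)) = s)
        (univ.filter fun f => ∀ a, (f a : ℕ) < s) := by
      rw [Finset.disjoint_left]
      intro f hf1 hf2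
      simp only [mem_filter, mem_univ, true_and] at hf1 hf2
      obtain ⟨a, -, ha⟩ := Finset.exists_mem_eq_sup univ ⟨a₀, mem_univ _⟩ (fun a => (f a : ℕ))
      have := hf2 a
      omega
    have hcu := Finset.card_union_of_disjoint hdisj
    rw [hunion] at hcu
    have hlt2 := card_lt_fun p n s (le_trans hs (Nat.le_succ n))
    have hle : (univ.filter fun f : Fin p → Fin (n + 1) => ∀ a, (f a : ℕ) ≤ s)
        = univ.filter fun f => ∀ a, (f a : ℕ) < s + 1 := by
      ext f; simp [Nat.lt_succ_iff]
    rw [hle] at hcu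
    rw [card_lt_fun p n (s + 1) (Nat.succ_le_succ hs), hlt2] at hcu
    clear * - hcu
    exact hcu.symm
  have hB : ∀ s, s ≤ n →
      (univ.filter fun g : Fin q → Fin (n + 1) => ∀ b, (g b : ℕ) ≤ n - s).card
        = (n - s + 1) ^ q := by
    intro s hs
    have hle : (univ.filter fun g : Fin q → Fin (n + 1) => ∀ b, (g b : ℕ) ≤ n - s)
        = univ.filter fun g => ∀ b, (g b : ℕ) < n - s + 1 := by
      ext g; simp [Nat.lt_succ_iff]
    rw [hle, card_lt_fun q n (n - s + 1) (by omega)]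
  -- assemble
  rw [h1, h2]
  push_cast
  apply Finset.sum_congr rfl
  intro s hs
  have hsn : s ≤ n := by rw [mem_range, Nat.lt_succ_iff] at hs; exact hs
  rw [h3 s hs, Finset.card_product, hB s hsn]
  have := hA s hsn
  have hcast : ((univ.filter fun f : Fin p → Fin (n + 1) =>
      univ.sup (fun a => (f a : ℕ)) = s).card : ℚ) = ((s : ℚ) + 1) ^ p - (s : ℚ) ^ p := by
    have := congrArg (fun x : ℕ => (x : ℚ)) this
    push_cast at this
    linarith
  push_cast
  rw [hcast]

-- ###### part C : power series assembly
lemma coeff_eulerianPolyShifted (t i : ℕ) :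
    (eulerianPolyShifted t).coeff i = if i < t then (eulerian t (i + 1) : ℚ) else 0 := by
  unfold eulerianPolyShifted
  rw [finset_sum_coeff]
  simp only [Polynomial.coeff_C_mul, Polynomial.coeff_X_pow, mul_ite, mul_one, mul_zero]
  simp only [eq_comm (a := i)]
  rw [Finset.sum_ite_eq' (range t) i (fun k => (eulerian t (k + 1) : ℚ))]
  simp [mem_range]

noncomputable def Spow (t : ℕ) : PowerSeries ℚ := PowerSeries.mk fun n => ((n : ℚ) + 1) ^ t

lemma worpitzkyQ (t : ℕ) (ht : 1 ≤ t) (n : ℕ) :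
    ((n : ℚ) + 1) ^ t
      = ∑ i ∈ range (n + 1),
          (if i < t then (eulerian t (i + 1) : ℚ) * ((t + (n - i)).choose t : ℚ) else 0) := by
  have key := worpitzky_s17 t ht n
  have h2 : ∀ i ∈ range t, i ∉ range t ∩ range (n + 1) →
      eulerian t (i + 1) * (n + t - i).choose t = 0 := by
    intro i hi hni
    simp only [mem_inter, mem_range, not_and, not_lt] at hni hi ⊢
    have hin : n + 1 ≤ i := hni hi
    have : n + t - i < t := by omega
    rw [Nat.choose_eq_zero_of_lt this, mul_zero]
  have h3 : ∀ i ∈ range (n + 1), i ∉ range t ∩ range (n + 1) →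
      (if i < t then (eulerian t (i + 1) : ℚ) * ((t + (n - i)).choose t : ℚ) else 0) = 0 := by
    intro i hi hni
    simp only [mem_inter, mem_range, not_and, not_lt] at hni hi
    rw [if_neg (by omega)]
  rw [← Finset.sum_subset inter_subset_right h3]
  have h4 := Finset.sum_subset (inter_subset_left (s₁ := range t) (s₂ := range (n + 1))) h2
  have key2 : ((n : ℚ) + 1) ^ t
      = ((∑ i ∈ range t ∩ range (n + 1), eulerian t (i + 1) * (n + t - i).choose t : ℕ) : ℚ) := by
    rw [h4, ← key]; push_cast; ring
  rw [key2, Nat.cast_sum]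
  apply Finset.sum_congr rfl
  intro i hi
  simp only [mem_inter, mem_range] at hi
  rw [if_pos hi.1, show t + (n - i) = n + t - i by omega]
  push_cast
  ring

lemma Spow_eq (t : ℕ) (ht : 1 ≤ t) :
    Spow t * ((1 : PowerSeries ℚ) - PowerSeries.X) ^ (t + 1) = (eulerianPolyShifted t : PowerSeries ℚ) := by
  have h1 : Spow t = (eulerianPolyShifted t : PowerSeries ℚ) * (invOneSubPow ℚ (t + 1)).val := by
    rw [invOneSubPow_val_succ_eq_mk_add_choose]
    ext n
    rw [PowerSeries.coeff_mul]
    simp only [Polynomial.coeff_coe, coeff_mk, coeff_eulerianPolyShifted]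
    rw [Finset.Nat.sum_antidiagonal_eq_sum_range_succ_mk]
    simp only [Spow, coeff_mk] at *
    rw [worpitzkyQ t ht n]
    apply Finset.sum_congr rfl
    intro i hi
    split <;> simp
  rw [h1, mul_assoc, ← invOneSubPow_inv_eq_one_sub_pow ℚ (t + 1), Units.val_inv, mul_one]

noncomputable def Gser (t : ℕ) : PowerSeries ℚ :=
  PowerSeries.mk fun s => ((s : ℚ) + 1) ^ t - (s : ℚ) ^ t

lemma G_eq (t : ℕ) (ht : 1 ≤ t) : ((1 : PowerSeries ℚ) - PowerSeries.X) * Spow t = Gser t := by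
  rw [sub_mul, one_mul]
  ext n
  rw [map_sub]
  cases n with
  | zero =>
      simp [Spow, Gser, PowerSeries.coeff_zero_X_mul, zero_pow (by omega : t ≠ 0)]
  | succ m =>
      simp only [Spow, Gser, PowerSeries.coeff_succ_X_mul, coeff_mk]
      push_cast
      ring

lemma K_eq (p q n : ℕ) (hp : 1 ≤ p) (hq : 1 ≤ q) :
    (PowerSeries.mk fun n => (WG (completeBipartiteGraph (Fin p) (Fin q)) n : ℚ))
      = Gser p * Spow q := by
  ext n
  rw [PowerSeries.coeff_mul, Finset.Nat.sum_antidiagonal_eq_sum_range_succ_mk]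
  simp only [Gser, Spow, coeff_mk]
  exact WG_eq p q n hp hq

theorem complete_bipartite_gen_fun (p q : ℕ) (hp : 1 ≤ p) (hq : 1 ≤ q) :
    (PowerSeries.mk fun n => (WG (completeBipartiteGraph (Fin p) (Fin q)) n : ℚ))
        * (1 - PowerSeries.X) ^ (p + q + 1)
      = ((eulerianPolyShifted p * eulerianPolyShifted q : Polynomial ℚ) : PowerSeries ℚ) := by
  set K : PowerSeries ℚ :=
    PowerSeries.mk fun n => (WG (completeBipartiteGraph (Fin p) (Fin q)) n : ℚ) with hK
  -- G_t = (1 - X) * Spow t.  Hence K * (1-X)^(p+q+1) = (Spow p (1-X)^(p+1)) * (Spow q (1-X)^(q+1)).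
  have key : K * ((1 : PowerSeries ℚ) - PowerSeries.X) = (((1 : PowerSeries ℚ) - PowerSeries.X) * Spow p) * (((1 : PowerSeries ℚ) - PowerSeries.X) * Spow q) := by
    rw [G_eq p hp, G_eq q hq, ← G_eq q hq, hK, K_eq p q 0 hp hq]
    ring
  have : K * ((1 : PowerSeries ℚ) - PowerSeries.X) ^ (p + q + 1)
      = (Spow p * ((1 : PowerSeries ℚ) - PowerSeries.X) ^ (p + 1)) * (Spow q * ((1 : PowerSeries ℚ) - PowerSeries.X) ^ (q + 1)) := by
    have expand : ((1 : PowerSeries ℚ) - PowerSeries.X) ^ (p + q + 1)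
        = ((1 : PowerSeries ℚ) - PowerSeries.X) * (((1 : PowerSeries ℚ) - PowerSeries.X) ^ p * ((1 : PowerSeries ℚ) - PowerSeries.X) ^ q) := by
      rw [← pow_add, ← pow_succ']
    rw [expand, ← mul_assoc, key]
    ring
  rw [this, Spow_eq p hp, Spow_eq q hq, Polynomial.coe_mul]
end

section
/- Let OH be the octahedral graph: the complete tripartite graph on six vertices, with vertex set {1,2,3} × {0,1} and two vertices (i,a), (j,b) adjacent if and only if i ≠ j. Then for every nonnegative integer n, 160·W(OH)(n) = 6n⁶ + 54n⁵ + 210n⁴ + 450n³ + 559n² + 381n + 115 + (−1)^n·(10n³ + 45n² + 75n + 45). -/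
/-- The octahedral graph: vertices are pairs in `{1,2,3} × {0,1}`, and `(i,a)` is
adjacent to `(j,b)` iff `i ≠ j` (the complete tripartite graph on three pairs). -/
def octahedralGraph : SimpleGraph (Fin 3 × Fin 2) where
  Adj u v := u.1 ≠ v.1
  symm := ⟨fun _ _ h => h.symm⟩
  loopless := ⟨fun _ h => h rfl⟩

/-!
Write `m_i = max (α (i,0)) (α (i,1))` for the part maxima of a weighting of the octahedron
`(⊤ : SimpleGraph (Fin 3)).comap Prod.fst`; the edge constraints say exactly `m_i + m_j ≤ n`
for `i ≠ j`, and `2m + 1` of the pairs have maximum `m`. At most one part can have `2 m_i > n`.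
If none does, every `m_i` ranges over `[0, n/2]`; if part `i` has `m_i = m > n/2`, the other
maxima range over `[0, n - m]`. Hence
`W(n) = (⌊n/2⌋ + 1)^6 + 3 ∑_{n/2 < m ≤ n} (2m + 1)(n + 1 - m)^4`,
and a closed form for the power sum finishes the proof separately for even and odd `n`.
-/

open Finset

lemma sum_range_two_mul_add_one (K : ℕ) : ∑ m ∈ range K, (2 * m + 1) = K ^ 2 := by
  induction K with
  | zero => simp
  | succ K ih => rw [sum_range_succ, ih]; ring

lemma sum_range_sum_range_max {M : Type*} [AddCommMonoid M] (N : ℕ) (f : ℕ → M) :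
    ∑ a ∈ range N, ∑ b ∈ range N, f (max a b) = ∑ m ∈ range N, (2 * m + 1) • f m := by
  induction N with
  | zero => simp
  | succ N ih =>
    have hrow : ∀ a ∈ range N, ∑ b ∈ range (N + 1), f (max a b)
        = ∑ b ∈ range N, f (max a b) + f N := fun a ha => by
      rw [sum_range_succ, max_eq_right (mem_range.1 ha).le]
    have hcol : ∑ b ∈ range (N + 1), f (max N b) = N • f N + f N := by
      rw [sum_range_succ, max_self,
        sum_congr rfl fun b hb => by rw [max_eq_left (mem_range.1 hb).le], sum_const, card_range]
    rw [sum_range_succ, sum_congr rfl hrow, sum_add_distrib, ih, sum_const, card_range, hcol,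
      sum_range_succ, two_mul, add_smul, add_smul, one_smul]
    abel

def pairMax {N : ℕ} (p : Fin N × Fin N) : ℕ := max (p.1 : ℕ) p.2

lemma sum_pairMax {M : Type*} [AddCommMonoid M] (N : ℕ) (f : ℕ → M) :
    ∑ p : Fin N × Fin N, f (pairMax p) = ∑ m ∈ range N, (2 * m + 1) • f m := by
  rw [Fintype.sum_prod_type, ← sum_range_sum_range_max]
  simp only [pairMax]
  rw [← Fin.sum_univ_eq_sum_range]
  refine sum_congr rfl fun a _ => Fin.sum_univ_eq_sum_range (fun b => f (max (a : ℕ) b)) N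

lemma sum_filter_pairMax (N : ℕ) (P : ℕ → Prop) [DecidablePred P] (g : ℕ → ℕ) :
    ∑ p : Fin N × Fin N with P (pairMax p), g (pairMax p)
      = ∑ m ∈ range N with P m, (2 * m + 1) * g m := by
  rw [sum_filter, sum_filter, sum_pairMax (f := fun m => if P m then g m else 0)]
  simp only [smul_eq_mul, mul_ite, mul_zero]

lemma card_filter_pairMax (N : ℕ) (P : ℕ → Prop) [DecidablePred P] :
    #{p : Fin N × Fin N | P (pairMax p)} = ∑ m ∈ range N with P m, (2 * m + 1) := by
  simpa using sum_filter_pairMax N P 1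

lemma pairwise_add_le_iff {ι : Type*} (n : ℕ) (y : ι → ℕ) :
    (∀ i j, i ≠ j → y i + y j ≤ n)
      ↔ (∀ i, 2 * y i ≤ n) ∨ ∃ i, n < 2 * y i ∧ ∀ j ≠ i, y i + y j ≤ n := by
  constructor
  · intro h
    by_cases hsmall : ∀ i, 2 * y i ≤ n
    · exact Or.inl hsmall
    · simp only [not_forall, not_le] at hsmall
      obtain ⟨i, hi⟩ := hsmall
      exact Or.inr ⟨i, hi, fun j hj => h i j hj.symm⟩
  · rintro (h | ⟨k, hk, h⟩) i j hij
    · have := h i; have := h j; omega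
    · by_cases hik : i = k
      · subst hik; exact h j (Ne.symm hij)
      by_cases hjk : j = k
      · subst hjk; have := h i hik; omega
      · have := h i hik; have := h j hjk; omega

section
variable {ι β : Type*} [Fintype ι] [DecidableEq ι] [Fintype β] (x : β → ℕ) (n : ℕ)

lemma card_filter_forall_two_mul_le :
    #{α : ι → β | ∀ i, 2 * x (α i) ≤ n} = #{b | 2 * x b ≤ n} ^ Fintype.card ι := by
  have : ({α | ∀ i, 2 * x (α i) ≤ n} : Finset (ι → β))
      = Fintype.piFinset fun _ => {b | 2 * x b ≤ n} := by
    ext α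
    simp
  rw [this, Fintype.card_piFinset, prod_const, card_univ]

variable [DecidableEq β]

lemma card_filter_lt_two_mul_and_forall_ne_add_le (i : ι) :
    #{α : ι → β | n < 2 * x (α i) ∧ ∀ j ≠ i, x (α i) + x (α j) ≤ n}
      = ∑ b with n < 2 * x b, #{c | x b + x c ≤ n} ^ (Fintype.card ι - 1) := by
  rw [card_eq_sum_card_fiberwise (f := fun α => α i) (t := univ)
    (fun _ _ => mem_coe.2 (mem_univ _)), sum_filter]
  refine sum_congr rfl fun b _ => ?_
  split_ifs with hb
  · calc _ = #(Fintype.piFinset fun j =>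
              if j = i then {b} else ({c | x b + x c ≤ n} : Finset β)) := by
          congr 1
          ext α
          simp only [mem_filter, mem_univ, true_and, Fintype.mem_piFinset]
          constructor
          · rintro ⟨⟨-, h⟩, rfl⟩ j
            split_ifs with hj
            · simp [hj]
            · simpa using h j hj
          · intro h
            have hi : α i = b := by simpa using h i
            subst hi
            refine ⟨⟨hb, fun j hj => ?_⟩, rfl⟩
            simpa [hj] using h j
      _ = _ := by
          rw [Fintype.card_piFinset, Fintype.prod_eq_mul_prod_compl i, if_pos rfl, card_singleton,
            one_mul, prod_congr rfl fun j hj => by rw [if_neg (by simpa using hj)], prod_const,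
            card_compl, card_singleton]
  · refine card_eq_zero.2 (filter_eq_empty_iff.2 fun α hα hαi => ?_)
    simp only [mem_filter] at hα
    exact hb (hαi ▸ hα.2.1)

lemma card_filter_pairwise_add_le :
    #{α : ι → β | ∀ i j, i ≠ j → x (α i) + x (α j) ≤ n}
      = #{b | 2 * x b ≤ n} ^ Fintype.card ι
        + Fintype.card ι
          * ∑ b with n < 2 * x b, #{c | x b + x c ≤ n} ^ (Fintype.card ι - 1) := by
  have hsplit : ({α | ∀ i j, i ≠ j → x (α i) + x (α j) ≤ n} : Finset (ι → β))
      = ({α | ∀ i, 2 * x (α i) ≤ n} : Finset (ι → β))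
        ∪ univ.biUnion fun i =>
            ({α | n < 2 * x (α i) ∧ ∀ j ≠ i, x (α i) + x (α j) ≤ n} : Finset _) := by
    ext α
    simp only [mem_union, mem_biUnion, mem_filter, mem_univ, true_and]
    exact pairwise_add_le_iff n (x ∘ α)
  rw [hsplit, card_union_of_disjoint, card_biUnion, card_filter_forall_two_mul_le,
    sum_congr rfl fun i _ => card_filter_lt_two_mul_and_forall_ne_add_le x n i, sum_const,
    card_univ, smul_eq_mul]
  · intro i _ j _ hij
    refine disjoint_filter.2 fun α _ hi hj => ?_
    have := hi.2 j (Ne.symm hij)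
    omega
  · refine disjoint_left.2 fun α h0 h1 => ?_
    simp only [mem_biUnion, mem_filter, mem_univ, true_and] at h0 h1
    obtain ⟨i, hi, -⟩ := h1
    have := h0 i
    omega

end

lemma WG_eq_card {V : Type*} [Fintype V] [DecidableEq V] (G : SimpleGraph V)
    [DecidableRel G.Adj] (n : ℕ) :
    WG G n = #{α : V → Fin (n + 1) | ∀ u v, G.Adj u v → (α u : ℕ) + α v ≤ n} := by
  let e : {α : V → ℕ // (∀ v, α v ≤ n) ∧ ∀ u v, G.Adj u v → α u + α v ≤ n} ≃
      {α : V → Fin (n + 1) // ∀ u v, G.Adj u v → (α u : ℕ) + α v ≤ n} :=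
    { toFun α := ⟨fun v => ⟨α.1 v, Nat.lt_succ_of_le (α.2.1 v)⟩, α.2.2⟩
      invFun α := ⟨fun v => α.1 v, fun v => Nat.le_of_lt_succ (α.1 v).2, α.2⟩
      left_inv _ := rfl
      right_inv _ := rfl }
  rw [WG, Nat.card_congr e, Nat.card_eq_fintype_card, Fintype.card_subtype]

lemma WG_comap_fst {ι : Type*} [Fintype ι] [DecidableEq ι] (H : SimpleGraph ι)
    [DecidableRel H.Adj] (n : ℕ) :
    WG (H.comap (Prod.fst : ι × Fin 2 → ι)) n
      = #{α : ι → Fin (n + 1) × Fin (n + 1) |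
          ∀ i j, H.Adj i j → pairMax (α i) + pairMax (α j) ≤ n} := by
  let e : (ι × Fin 2 → Fin (n + 1)) ≃ (ι → Fin (n + 1) × Fin (n + 1)) :=
    (Equiv.curry _ _ _).trans (Equiv.piCongrRight fun _ => piFinTwoEquiv _)
  rw [WG_eq_card, ← Fintype.card_subtype, ← Fintype.card_subtype]
  refine Fintype.card_congr (e.subtypeEquiv fun α => ?_)
  simp only [SimpleGraph.comap_adj, Prod.forall]
  refine forall_congr' fun i => forall_comm.trans (forall_congr' fun j => ?_)
  simp only [Fin.forall_fin_two, ← imp_and]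
  exact imp_congr_right fun _ => by
    simp only [pairMax, e, Equiv.trans_apply, Equiv.piCongrRight_apply, Equiv.curry_apply,
      piFinTwoEquiv_apply, Pi.map_apply, Function.curry_apply]
    omega

theorem WG_comap_fst_top (ι : Type*) [Fintype ι] [DecidableEq ι] (n : ℕ) :
    WG ((⊤ : SimpleGraph ι).comap (Prod.fst : ι × Fin 2 → ι)) n
      = (n / 2 + 1) ^ (2 * Fintype.card ι)
        + Fintype.card ι * ∑ m ∈ Ico (n / 2 + 1) (n + 1),
            (2 * m + 1) * (n + 1 - m) ^ (2 * (Fintype.card ι - 1)) := by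
  have hsmall : #{p : Fin (n + 1) × Fin (n + 1) | 2 * pairMax p ≤ n} = (n / 2 + 1) ^ 2 := by
    rw [card_filter_pairMax (P := fun m => 2 * m ≤ n), ← sum_range_two_mul_add_one]
    congr 1
    ext m
    simp only [mem_filter, mem_range]
    omega
  have hpartner (p : Fin (n + 1) × Fin (n + 1)) :
      #{c : Fin (n + 1) × Fin (n + 1) | pairMax p + pairMax c ≤ n}
        = (n + 1 - pairMax p) ^ 2 := by
    rw [card_filter_pairMax (P := fun m => pairMax p + m ≤ n), ← sum_range_two_mul_add_one]
    congr 1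
    ext m
    simp only [mem_filter, mem_range]
    omega
  have hlarge : ({m ∈ range (n + 1) | n < 2 * m} : Finset ℕ) = Ico (n / 2 + 1) (n + 1) := by
    ext m
    simp only [mem_filter, mem_range, mem_Ico]
    omega
  simp only [WG_comap_fst, SimpleGraph.top_adj, card_filter_pairwise_add_le, hsmall, hpartner,
    ← pow_mul]
  rw [sum_filter_pairMax (P := fun m => n < 2 * m)
    (g := fun m => (n + 1 - m) ^ (2 * (Fintype.card ι - 1))), hlarge]

lemma sum_range_two_mul_add_one_mul_sub_pow_four {R : Type*} [CommRing R] (c : R) (K : ℕ) :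
    30 * ∑ m ∈ range K, (2 * (m : R) + 1) * (c - m) ^ 4
      = -(K : R) - 5 * K ^ 2 + 10 * K ^ 3 + 10 * K ^ 4 - 24 * K ^ 5 + 10 * K ^ 6
        + c * (8 * K - 30 * K ^ 2 - 20 * K ^ 3 + 90 * K ^ 4 - 48 * K ^ 5)
        + c ^ 2 * (30 * K - 120 * K ^ 3 + 90 * K ^ 4)
        + c ^ 3 * (20 * K + 60 * K ^ 2 - 80 * K ^ 3)
        + c ^ 4 * (30 * K ^ 2) := by
  induction K with
  | zero => simp
  | succ K ih =>
    rw [sum_range_succ, mul_add, ih]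
    push_cast
    ring

lemma octahedral_count_closed_form (n : ℕ) :
    ((160 * ((n / 2 + 1) ^ 6
        + 3 * ∑ m ∈ Ico (n / 2 + 1) (n + 1), (2 * m + 1) * (n + 1 - m) ^ 4) : ℕ) : ℤ)
      = 6 * n ^ 6 + 54 * n ^ 5 + 210 * n ^ 4 + 450 * n ^ 3 + 559 * n ^ 2 + 381 * n + 115
        + (-1) ^ n * (10 * n ^ 3 + 45 * n ^ 2 + 75 * n + 45) := by
  have hcast : ((∑ m ∈ Ico (n / 2 + 1) (n + 1), (2 * m + 1) * (n + 1 - m) ^ 4 : ℕ) : ℤ)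
      = ∑ m ∈ Ico (n / 2 + 1) (n + 1), (2 * (m : ℤ) + 1) * ((n : ℤ) + 1 - m) ^ 4 := by
    push_cast
    refine sum_congr rfl fun m hm => ?_
    rw [Nat.cast_sub (mem_Ico.1 hm).2.le]
    push_cast
    ring
  have hfull := sum_range_two_mul_add_one_mul_sub_pow_four ((n : ℤ) + 1) (n + 1)
  have hhalf := sum_range_two_mul_add_one_mul_sub_pow_four ((n : ℤ) + 1) (n / 2 + 1)
  rw [Nat.cast_mul, Nat.cast_add, Nat.cast_mul, hcast,
    sum_Ico_eq_sub _ (by omega : n / 2 + 1 ≤ n + 1)]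
  obtain ⟨k, rfl | rfl⟩ := Nat.even_or_odd' n
  · rw [show 2 * k / 2 = k by omega, Even.neg_one_pow ⟨k, two_mul k⟩] at *
    push_cast at *
    linear_combination 16 * hfull - 16 * hhalf
  · rw [show (2 * k + 1) / 2 = k by omega, Odd.neg_one_pow ⟨k, rfl⟩] at *
    push_cast at *
    linear_combination 16 * hfull - 16 * hhalf

theorem octahedral_weightings (n : ℕ) :
    (160 * WG octahedralGraph n : ℤ)
      = 6 * n ^ 6 + 54 * n ^ 5 + 210 * n ^ 4 + 450 * n ^ 3 + 559 * n ^ 2 + 381 * n + 115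
        + (-1) ^ n * (10 * n ^ 3 + 45 * n ^ 2 + 75 * n + 45) := by
  have hG : octahedralGraph = (⊤ : SimpleGraph (Fin 3)).comap Prod.fst := rfl
  rw [hG, WG_comap_fst_top, Fintype.card_fin]
  exact_mod_cast octahedral_count_closed_form n
end
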